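/- arXiv:0810.2122 — 5 statements merged into one kernel-verified Lean document; each statement's English description precedes it below -/
import Mathlib

section
/- For every 0 < ρ' < ρ ≤ 1 there exists M > 0 such that for all τ > 0 and T > 0 with T ≥ Mτ one has G(τ, ρτ) ⊆ G(T, ρ'T); that is, every (τ, ρτ)-signal is a (T, ρ'T)-signal. -/
/-! A `(τ, ρτ)`-signal gains `ρτ` of mass on each of the `⌊T/τ⌋` consecutive windows of length
`τ` that fit into a window of length `T`, hence more than `ρ(T - τ)`. Once `T ≥ ρτ/(ρ - ρ')`
this exceeds `ρ'T`. -/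

open MeasureTheory Filter Matrix

noncomputable section

/-- A `(T,μ)`-signal: a measurable function with values in `[0,1]` whose integral over any
window `[t, t+T]` with `t ≥ 0` is at least `μ`. -/
def IsPESignal (T μ : ℝ) (α : ℝ → ℝ) : Prop :=
  Measurable α ∧ (∀ t, α t ∈ Set.Icc (0:ℝ) 1) ∧
    ∀ t : ℝ, 0 ≤ t → μ ≤ ∫ s in t..(t + T), α s

namespace IsPESignal

variable {T μ : ℝ} {α : ℝ → ℝ}

theorem intervalIntegrable (h : IsPESignal T μ α) (a b : ℝ) :
    IntervalIntegrable α volume a b := by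
  refine IntervalIntegrable.mono_fun' (g := fun _ => (1:ℝ))
    intervalIntegrable_const h.1.aestronglyMeasurable.restrict (Eventually.of_forall fun x => ?_)
  show ‖α x‖ ≤ 1
  rw [Real.norm_eq_abs, abs_of_nonneg (h.2.1 x).1]
  exact (h.2.1 x).2

theorem mono_right {μ' : ℝ} (h : IsPESignal T μ α) (hμ : μ' ≤ μ) : IsPESignal T μ' α :=
  ⟨h.1, h.2.1, fun t ht => hμ.trans (h.2.2 t ht)⟩

theorem nat_mul_le_integral (h : IsPESignal T μ α) (hT : 0 ≤ T) (n : ℕ) {t : ℝ} (ht : 0 ≤ t) :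
    n * μ ≤ ∫ s in t..(t + n * T), α s := by
  induction n with
  | zero => simp
  | succ n ih =>
    have hwindow : μ ≤ ∫ s in (t + n * T)..(t + n * T + T), α s := h.2.2 _ (by positivity)
    rw [← intervalIntegral.integral_add_adjacent_intervals (h.intervalIntegrable t (t + n * T))
      (h.intervalIntegrable _ _)]
    push_cast
    rw [show t + (n + 1) * T = t + n * T + T by ring]
    linarith

theorem floor_div_mul (h : IsPESignal T μ α) (hT : 0 < T) {T' : ℝ} (hT' : 0 ≤ T') :
    IsPESignal T' (⌊T' / T⌋₊ * μ) α := by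
  refine ⟨h.1, h.2.1, fun t ht => (h.nat_mul_le_integral hT.le _ ht).trans ?_⟩
  have hfit : ⌊T' / T⌋₊ * T ≤ T' := (le_div_iff₀ hT).1 (Nat.floor_le (by positivity))
  have hstart : t ≤ t + ⌊T' / T⌋₊ * T := le_add_of_nonneg_right (by positivity)
  exact intervalIntegral.integral_mono_interval le_rfl hstart (by linarith)
    (Eventually.of_forall fun x => (h.2.1 x).1) (h.intervalIntegrable _ _)

end IsPESignal

theorem pe_signal_ratio_almost_preserved_general (ρ ρ' : ℝ) (hρ' : 0 < ρ') (hρρ' : ρ' < ρ) :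
    ∃ M > (0:ℝ), ∀ τ T : ℝ, 0 < τ → 0 < T → M * τ ≤ T →
      ∀ α : ℝ → ℝ, IsPESignal τ (ρ * τ) α → IsPESignal T (ρ' * T) α := by
  have hgap : 0 < ρ - ρ' := sub_pos.2 hρρ'
  refine ⟨ρ / (ρ - ρ'), div_pos (hρ'.trans hρρ') hgap, fun τ T hτ hT hMT α hα => ?_⟩
  refine (hα.floor_div_mul hτ hT.le).mono_right ?_
  have hfloor : T - τ < ⌊T / τ⌋₊ * τ := by
    have := Nat.sub_one_lt_floor (T / τ)
    rwa [sub_lt_iff_lt_add, div_lt_iff₀ hτ, add_mul, one_mul, ← sub_lt_iff_lt_add] at this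
  have hmass : ρ * τ ≤ (ρ - ρ') * T := by
    rwa [div_mul_eq_mul_div, div_le_iff₀ hgap, mul_comm T] at hMT
  nlinarith

/-- Lemma 1(5): for every `0 < ρ' < ρ ≤ 1` there exists `M > 0` such that whenever
`T ≥ Mτ > 0` one has `G(τ, ρτ) ⊆ G(T, ρ'T)`. -/
theorem pe_signal_ratio_almost_preserved (ρ ρ' : ℝ) (hρ' : 0 < ρ') (hρρ' : ρ' < ρ)
    (hρ : ρ ≤ 1) :
    ∃ M > (0:ℝ), ∀ τ T : ℝ, 0 < τ → 0 < T → M * τ ≤ T →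
      ∀ α : ℝ → ℝ, IsPESignal τ (ρ * τ) α → IsPESignal T (ρ' * T) α :=
  pe_signal_ratio_almost_preserved_general ρ ρ' hρ' hρρ'

end
end

section
/- Let 0 < μ ≤ T, j₀ ∈ {0,1}, h ∈ ℕ, and let ω_{j₀},...,ω_h be real numbers with ω_j = 0 if and only if j = 0 and {ω_j, −ω_j} ≠ {ω_l, −ω_l} for j ≠ l. Then there exists ξ > 0, depending only on T, μ and ω_{j₀},...,ω_h, such that for every (T,μ)-signal α and every t ≥ 0 one has ∫_t^{t+T} α(τ) v(τ) v(τ)ᵀ dτ ≥ ξ Id_{2h+1−j₀} in the order of symmetric matrices. -/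
/-!
For a coefficient vector `x`, the quadratic form sees `x` only through the trigonometric
polynomial `x ⬝ᵥ v(s)`. Writing the pair of coefficients of `sin (ω_j s)`, `cos (ω_j s)` as one
complex number `z_j`, this is `c + ∑ j, Re (z_j e^{i ω_j s})`, so a time shift merely rotates
each `z_j`: every window `[t, t + T]` can be moved to `[0, T]` without changing `|x|`.
Since `0, ±ω_j` are distinct frequencies, Dedekind's independence of characters shows that the
polynomial of a nonzero `x` does not vanish identically; being analytic, it then vanishes only on
a null set. Compactness of the unit sphere gives `ε > 0` such that, for every unit `x`, the
polynomial has modulus at most `ε` on a subset of `[0, T]` of measure at most `μ / 2`; hence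
`∫₀ᵀ α (x ⬝ᵥ v)² ≥ ε² (∫₀ᵀ α - μ / 2) ≥ ε² μ / 2`.
-/

open MeasureTheory Filter Matrix

noncomputable section

/-- The vector `v(t) ∈ ℝ^{2h+1-j₀}`: its components are `1` (present only when `j₀ = 0`,
corresponding to `ω₀ = 0`) followed by the pairs `e^{ω_j A₀ t} b₀ = (sin(ω_j t), cos(ω_j t))`
for `j = 1, …, h`, where `A₀ = [[0,1],[-1,0]]` and `b₀ = (0,1)ᵀ`. -/
def pev (j₀ h : ℕ) (ω : ℕ → ℝ) (t : ℝ) : Fin (2 * h + 1 - j₀) → ℝ := fun i =>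
  if (i : ℕ) + j₀ = 0 then 1
  else if ((i : ℕ) + j₀) % 2 = 1 then Real.sin (ω (((i : ℕ) + j₀ + 1) / 2) * t)
  else Real.cos (ω (((i : ℕ) + j₀) / 2) * t)

open Topology Set Complex ComplexConjugate
open scoped ENNReal

theorem AnalyticOnNhd.ae_ne_zero {E : Type*} [NormedAddCommGroup E] [NormedSpace ℝ E]
    {f : ℝ → E} (hf : AnalyticOnNhd ℝ f univ) {x : ℝ} (hx : f x ≠ 0) : ∀ᵐ s, f s ≠ 0 := by
  have := ae_restrict_le_codiscreteWithin (μ := (volume : Measure ℝ)) MeasurableSet.univ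
  rw [Measure.restrict_univ] at this
  exact this (hf.preimage_zero_mem_codiscrete hx)

theorem exists_pos_volume_abs_le_lt {g : ℝ → ℝ} (hg : Continuous g) (hg0 : ∀ᵐ s, g s ≠ 0)
    (a b : ℝ) {η : ℝ≥0∞} (hη : 0 < η) : ∃ δ > 0, volume {s ∈ Icc a b | |g s| ≤ δ} < η := by
  set S : ℝ → Set ℝ := fun δ => {s ∈ Icc a b | |g s| ≤ δ}
  have hS : ∀ δ, MeasurableSet (S δ) := fun δ =>
    measurableSet_Icc.inter (measurableSet_le hg.abs.measurable measurable_const)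
  have hnull : volume (⋂ δ > 0, S δ) = 0 := by
    refine measure_mono_null (fun s hs => ?_) (ae_iff.mp hg0)
    simp only [mem_iInter, S, mem_ofPred_eq] at hs
    exact not_not_intro <| abs_nonpos_iff.mp <|
      le_of_forall_pos_le_add fun δ hδ => by simpa using (hs δ hδ).2
  have hlim := tendsto_measure_biInter_gt (μ := volume) (fun δ _ => (hS δ).nullMeasurableSet)
    (fun δ δ' _ hδδ' s hs => ⟨hs.1, hs.2.trans hδδ'⟩)
    ⟨1, one_pos, ((measure_mono fun s hs => hs.1).trans_lt measure_Icc_lt_top).ne⟩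
  rw [hnull] at hlim
  obtain ⟨δ, hδη, hδ⟩ := ((hlim.eventually (gt_mem_nhds hη)).and self_mem_nhdsWithin).exists
  exact ⟨δ, hδ, hδη⟩

theorem IsCompact.exists_pos_forall_volume_abs_le_lt {X : Type*} [TopologicalSpace X]
    {K : Set X} (hK : IsCompact K) {F : X → ℝ → ℝ} (hF : Continuous fun p : X × ℝ => F p.1 p.2)
    (hF0 : ∀ x ∈ K, ∀ᵐ s, F x s ≠ 0) (a b : ℝ) {η : ℝ≥0∞} (hη : 0 < η) :
    ∃ ε > 0, ∀ x ∈ K, volume {s ∈ Icc a b | |F x s| ≤ ε} < η := by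
  have hnear : ∀ x₀ ∈ K, ∀ᶠ p : ℝ × X in 𝓝 (0, x₀),
      volume {s ∈ Icc a b | |F p.2 s| ≤ p.1} < η := by
    intro x₀ hx₀
    obtain ⟨δ, hδ, hδη⟩ :=
      exists_pos_volume_abs_le_lt (by fun_prop) (hF0 x₀ hx₀) a b hη
    have hclose : ∀ᶠ p : ℝ × X in 𝓝 (0, x₀), ∀ s ∈ Icc a b, p.1 + |F p.2 s - F x₀ s| < δ := by
      refine isCompact_Icc.eventually_forall_of_forall_eventually fun s _ => ?_
      have hcont : Continuous fun q : (ℝ × X) × ℝ => q.1.1 + |F q.1.2 q.2 - F x₀ q.2| := by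
        fun_prop
      exact hcont.continuousAt.eventually_lt continuousAt_const (by simpa using hδ)
    filter_upwards [hclose] with p hp
    refine (measure_mono ?_).trans_lt hδη
    rintro s ⟨hs, hps⟩
    refine ⟨hs, ?_⟩
    have := abs_sub_abs_le_abs_sub (F x₀ s) (F p.2 s)
    rw [abs_sub_comm] at this
    linarith [hp s hs]
  obtain ⟨ε, hεK, hε⟩ := ((hK.eventually_forall_of_forall_eventually
    (P := fun ε x => volume {s ∈ Icc a b | |F x s| ≤ ε} < η) hnear).filter_mono
    nhdsWithin_le_nhds |>.and (self_mem_nhdsWithin (s := Ioi 0))).exists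
  exact ⟨ε, hε, hεK⟩

theorem sq_mul_sub_measureReal_le_integral_mul_sq {α g : ℝ → ℝ} {a b ε : ℝ} (hab : a ≤ b)
    (hε : 0 ≤ ε) (hα : Measurable α) (hα01 : ∀ s, α s ∈ Icc (0 : ℝ) 1) (hg : Continuous g) :
    ε ^ 2 * ((∫ s in a..b, α s) - volume.real {s ∈ Icc a b | |g s| ≤ ε}) ≤
      ∫ s in a..b, α s * g s ^ 2 := by
  set E := {s ∈ Icc a b | |g s| ≤ ε}
  have hE : MeasurableSet E :=
    measurableSet_Icc.inter (measurableSet_le hg.abs.measurable measurable_const)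
  have hαi : IntervalIntegrable α volume a b :=
    intervalIntegrable_const.mono_fun' hα.aestronglyMeasurable
      (ae_of_all _ fun s => (abs_of_nonneg (hα01 s).1).trans_le (hα01 s).2)
  have hEi : IntervalIntegrable (E.indicator 1) volume a b :=
    (intervalIntegrable_const (c := (1 : ℝ))).mono_fun'
      (measurable_const.indicator hE).aestronglyMeasurable
      (ae_of_all _ fun s => (norm_indicator_le_norm_self (1 : ℝ → ℝ) s).trans_eq norm_one)
  have hpt : ∀ s ∈ Icc a b, ε ^ 2 * α s - ε ^ 2 * E.indicator 1 s ≤ α s * g s ^ 2 := by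
    intro s hs
    obtain ⟨hα0, hα1⟩ := hα01 s
    by_cases hsE : s ∈ E
    · rw [indicator_of_mem hsE, Pi.one_apply]
      nlinarith [sq_nonneg ε, sq_nonneg (g s)]
    · rw [indicator_of_notMem hsE, mul_zero, sub_zero]
      have hεg : ε ^ 2 ≤ g s ^ 2 := by
        rw [← sq_abs (g s)]
        exact pow_le_pow_left₀ hε (lt_of_not_ge fun h => hsE ⟨hs, h⟩).le 2
      nlinarith
  have hEvol : (∫ s in a..b, E.indicator 1 s) ≤ volume.real E := by
    rw [intervalIntegral.integral_of_le hab, setIntegral_indicator hE, Pi.one_def,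
      setIntegral_const, smul_eq_mul, mul_one]
    exact measureReal_mono inter_subset_right
      ((measure_mono fun s hs => hs.1).trans_lt measure_Icc_lt_top).ne
  calc ε ^ 2 * ((∫ s in a..b, α s) - volume.real E)
      ≤ ε ^ 2 * ((∫ s in a..b, α s) - ∫ s in a..b, E.indicator 1 s) := by gcongr
    _ = ∫ s in a..b, ε ^ 2 * α s - ε ^ 2 * E.indicator 1 s := by
      rw [intervalIntegral.integral_sub (hαi.const_mul _) (hEi.const_mul _),
        intervalIntegral.integral_const_mul, intervalIntegral.integral_const_mul, mul_sub]
    _ ≤ ∫ s in a..b, α s * g s ^ 2 :=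
      intervalIntegral.integral_mono_on hab ((hαi.const_mul _).sub (hEi.const_mul _))
        (hαi.mul_continuousOn (hg.pow 2).continuousOn) hpt

theorem IsCompact.exists_pos_forall_le_integral_mul_sq {X : Type*} [TopologicalSpace X]
    {K : Set X} (hK : IsCompact K) {F : X → ℝ → ℝ} (hF : Continuous fun p : X × ℝ => F p.1 p.2)
    (hF0 : ∀ x ∈ K, ∀ᵐ s, F x s ≠ 0) {T μ : ℝ} (hμ : 0 < μ) (hμT : μ ≤ T) :
    ∃ ξ > 0, ∀ x ∈ K, ∀ α : ℝ → ℝ, Measurable α → (∀ s, α s ∈ Icc (0 : ℝ) 1) →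
      μ ≤ ∫ s in 0..T, α s → ξ ≤ ∫ s in 0..T, α s * F x s ^ 2 := by
  obtain ⟨ε, hε, hεK⟩ := hK.exists_pos_forall_volume_abs_le_lt hF hF0 0 T
    (η := ENNReal.ofReal (μ / 2)) (by simpa using hμ)
  refine ⟨ε ^ 2 * (μ / 2), by positivity, fun x hx α hα hα01 hαμ => ?_⟩
  have hE := ENNReal.toReal_le_of_le_ofReal (by linarith) (hεK x hx).le
  calc ε ^ 2 * (μ / 2)
      ≤ ε ^ 2 * ((∫ s in 0..T, α s) - volume.real {s ∈ Icc 0 T | |F x s| ≤ ε}) := by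
        rw [measureReal_def]; gcongr; linarith
    _ ≤ ∫ s in 0..T, α s * F x s ^ 2 :=
      sq_mul_sub_measureReal_le_integral_mul_sq (hμ.le.trans hμT) hε.le hα hα01 (by fun_prop)

theorem linearIndependent_cexp_mul_I :
    LinearIndependent ℂ fun (l : ℝ) (s : ℝ) => cexp (l * s * I) := by
  let χ : ℝ → (Multiplicative ℝ →* ℂ) := fun l =>
    { toFun := fun s => cexp (l * s.toAdd * I)
      map_one' := by simp
      map_mul' := fun s s' => by simp only [toAdd_mul, ofReal_add, ← Complex.exp_add]; ring_nf }
  have hχ : Function.Injective χ := by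
    intro l l' hll'
    by_contra hne
    have hsub : l - l' ≠ 0 := sub_ne_zero.mpr hne
    -- at `s = π / (l - l')` the two characters differ by the factor `e^{iπ} = -1`
    set s := Real.pi / (l - l')
    have hs : (l - l') * s = Real.pi := mul_div_cancel₀ _ hsub
    obtain ⟨n, hn⟩ := Complex.exp_eq_exp_iff_exists_int.mp
      (DFunLike.congr_fun hll' (Multiplicative.ofAdd s))
    have him := congrArg Complex.im hn
    simp only [toAdd_ofAdd, mul_im, mul_re, ofReal_re, ofReal_im, mul_zero, sub_zero, I_im,
      mul_one, zero_mul, add_zero, I_re, add_im, intCast_re, re_ofNat, im_ofNat, intCast_im,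
      sub_self] at him
    have hπ : Real.pi * 1 = Real.pi * (2 * n) := by linarith
    have h2n : (2 * n : ℤ) = 1 := by
      exact_mod_cast (mul_left_cancel₀ Real.pi_ne_zero hπ).symm
    omega
  exact (linearIndependent_monoidHom (Multiplicative ℝ) ℂ).comp χ hχ

section TrigPoly

variable {ι : Type*} [Fintype ι]

def trigPoly (ω : ι → ℝ) (c : ℝ) (z : ι → ℂ) (s : ℝ) : ℝ :=
  c + ∑ j, (z j * cexp (ω j * s * I)).re

def coeffNormSq (c : ℝ) (z : ι → ℂ) : ℝ :=
  c ^ 2 + ∑ j, ‖z j‖ ^ 2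

theorem coeffNormSq_nonneg (c : ℝ) (z : ι → ℂ) : 0 ≤ coeffNormSq c z := by
  unfold coeffNormSq; positivity

theorem trigPoly_shift (ω : ι → ℝ) (c : ℝ) (z : ι → ℂ) (t u : ℝ) :
    trigPoly ω c (fun j => z j * cexp (ω j * t * I)) u = trigPoly ω c z (t + u) := by
  simp only [trigPoly, ofReal_add, mul_add, add_mul, Complex.exp_add, mul_assoc]

theorem coeffNormSq_shift (ω : ι → ℝ) (c : ℝ) (z : ι → ℂ) (t : ℝ) :
    coeffNormSq c (fun j => z j * cexp (ω j * t * I)) = coeffNormSq c z := by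
  simp only [coeffNormSq, norm_mul, ← ofReal_mul, norm_exp_ofReal_mul_I, mul_one]

theorem trigPoly_smul (ω : ι → ℝ) (r c : ℝ) (z : ι → ℂ) (s : ℝ) :
    trigPoly ω (r * c) (fun j => r • z j) s = r * trigPoly ω c z s := by
  simp only [trigPoly, smul_mul_assoc, smul_re, smul_eq_mul, mul_add, Finset.mul_sum]

theorem coeffNormSq_smul (r c : ℝ) (z : ι → ℂ) :
    coeffNormSq (r * c) (fun j => r • z j) = r ^ 2 * coeffNormSq c z := by
  simp only [coeffNormSq, norm_smul, Real.norm_eq_abs, mul_pow, sq_abs, mul_add, Finset.mul_sum]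

theorem analyticOnNhd_trigPoly (ω : ι → ℝ) (c : ℝ) (z : ι → ℂ) :
    AnalyticOnNhd ℝ (trigPoly ω c z) univ := fun _ _ =>
  analyticAt_const.add <| Finset.analyticAt_fun_sum _ fun _ _ =>
    AnalyticAt.re_ofReal (f := fun w => _ * cexp (_ * w * I)) (by fun_prop)

theorem continuous_trigPoly (ω : ι → ℝ) :
    Continuous fun p : (ℝ × (ι → ℂ)) × ℝ => trigPoly ω p.1.1 p.1.2 p.2 := by
  unfold trigPoly; fun_prop

theorem isCompact_setOf_coeffNormSq_eq_one :
    IsCompact {p : ℝ × (ι → ℂ) | coeffNormSq p.1 p.2 = 1} := by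
  refine Metric.isCompact_of_isClosed_isBounded
    (isClosed_eq (by unfold coeffNormSq; fun_prop) continuous_const)
    (isBounded_iff_forall_norm_le.mpr ⟨1, fun p hp => ?_⟩)
  rw [mem_ofPred_eq, coeffNormSq] at hp
  have hz : ∀ j, ‖p.2 j‖ ^ 2 ≤ ∑ i, ‖p.2 i‖ ^ 2 := fun j =>
    Finset.single_le_sum (fun i _ => sq_nonneg ‖p.2 i‖) (Finset.mem_univ j)
  rw [Prod.norm_def, max_le_iff, pi_norm_le_iff_of_nonneg zero_le_one, Real.norm_eq_abs,
    ← sq_le_one_iff_abs_le_one]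
  refine ⟨by nlinarith [Finset.sum_nonneg fun i (_ : i ∈ Finset.univ) => sq_nonneg ‖p.2 i‖],
    fun j => (pow_le_one_iff_of_nonneg (norm_nonneg _) two_ne_zero).mp ?_⟩
  nlinarith [hz j, sq_nonneg p.1]

theorem ofReal_trigPoly (ω : ι → ℝ) (c : ℝ) (z : ι → ℂ) (s : ℝ) :
    (trigPoly ω c z s : ℂ) = c + ∑ j, (z j / 2 * cexp (ω j * s * I) +
      conj (z j) / 2 * cexp (↑(-ω j) * s * I)) := by
  simp only [trigPoly, ofReal_add, ofReal_sum, re_eq_add_conj, map_mul, ← exp_conj, conj_ofReal,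
    conj_I]
  push_cast
  congr 1
  refine Finset.sum_congr rfl fun j _ => ?_
  ring_nf

theorem eq_zero_of_forall_trigPoly_eq_zero {ω : ι → ℝ} (hω : ∀ j, ω j ≠ 0)
    (hω' : Pairwise fun j l => ω j ≠ ω l ∧ ω j ≠ -ω l) {c : ℝ} {z : ι → ℂ}
    (h : ∀ s, trigPoly ω c z s = 0) : c = 0 ∧ z = 0 := by
  let freq : Option (ι ⊕ ι) → ℝ := fun i => i.elim 0 (Sum.elim ω fun j => -ω j)
  let coeff : Option (ι ⊕ ι) → ℂ := fun i =>
    i.elim c (Sum.elim (fun j => z j / 2) fun j => conj (z j) / 2)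
  have hneg : ∀ j l, ω j ≠ -ω l := fun j l hjl => by
    by_cases hjl' : j = l
    · subst hjl'; exact hω j (by linarith)
    · exact (hω' hjl').2 hjl
  have heq : ∀ j l, ω j = ω l → j = l := fun j l hjl => by
    by_contra hjl'; exact (hω' hjl').1 hjl
  have hfreq : Function.Injective freq := by
    rintro (_ | j | j) (_ | l | l) hjl <;> simp only [freq, Option.elim, Sum.elim_inl,
      Sum.elim_inr, reduceCtorEq, Option.some.injEq, Sum.inl.injEq, Sum.inr.injEq, neg_inj] at hjl ⊢
    exacts [hω l hjl.symm, hω l (neg_eq_zero.mp hjl.symm), hω j hjl, heq j l hjl,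
      hneg j l hjl, hω j (neg_eq_zero.mp hjl), hneg l j hjl.symm, heq j l hjl]
  have hcomb : ∑ i, coeff i • (fun s : ℝ => cexp (freq i * s * I)) = 0 := by
    ext s
    simp only [Finset.sum_apply, Pi.smul_apply, smul_eq_mul, Pi.zero_apply]
    rw [← ofReal_zero, ← h s, ofReal_trigPoly]
    simp [freq, coeff, Fintype.sum_option, Fintype.sum_sum_type, Finset.sum_add_distrib]
  have hzero := Fintype.linearIndependent_iff.mp
    (linearIndependent_cexp_mul_I.comp freq hfreq) coeff hcomb
  refine ⟨by simpa [coeff] using hzero none, funext fun j => ?_⟩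
  simpa [coeff] using hzero (some (.inl j))

theorem exists_pos_mul_coeffNormSq_le_integral_mul_trigPoly_sq {ω : ι → ℝ}
    (hω : ∀ j, ω j ≠ 0) (hω' : Pairwise fun j l => ω j ≠ ω l ∧ ω j ≠ -ω l)
    {T μ : ℝ} (hμ : 0 < μ) (hμT : μ ≤ T) :
    ∃ ξ > 0, ∀ α : ℝ → ℝ, Measurable α → (∀ s, α s ∈ Icc (0 : ℝ) 1) →
      ∀ t, μ ≤ ∫ s in t..t + T, α s → ∀ c z,
        ξ * coeffNormSq c z ≤ ∫ s in t..t + T, α s * trigPoly ω c z s ^ 2 := by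
  have hF0 : ∀ p ∈ {p : ℝ × (ι → ℂ) | coeffNormSq p.1 p.2 = 1},
      ∀ᵐ s, trigPoly ω p.1 p.2 s ≠ 0 := by
    rintro ⟨c, z⟩ hp
    obtain ⟨s, hs⟩ : ∃ s, trigPoly ω c z s ≠ 0 := by
      by_contra! hzero
      obtain ⟨rfl, rfl⟩ := eq_zero_of_forall_trigPoly_eq_zero hω hω' hzero
      simp [coeffNormSq] at hp
    exact (analyticOnNhd_trigPoly ω c z).ae_ne_zero hs
  obtain ⟨ξ, hξ, hK⟩ := isCompact_setOf_coeffNormSq_eq_one.exists_pos_forall_le_integral_mul_sq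
    (continuous_trigPoly ω) hF0 hμ hμT
  refine ⟨ξ, hξ, fun α hα hα01 t hαt c z => ?_⟩
  have hshift : ∀ f : ℝ → ℝ, ∫ s in t..t + T, f s = ∫ u in 0..T, f (t + u) := fun f => by
    rw [intervalIntegral.integral_comp_add_left, add_zero]
  rcases (coeffNormSq_nonneg c z).eq_or_lt with hN | hN
  · rw [← hN, mul_zero]
    exact intervalIntegral.integral_nonneg (by linarith) fun s _ =>
      mul_nonneg (hα01 s).1 (sq_nonneg _)
  set N := coeffNormSq c z
  set r := √N
  have hq := hK (r⁻¹ * c, fun j => r⁻¹ • (z j * cexp (ω j * t * I)))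
    (by rw [mem_ofPred_eq, coeffNormSq_smul, coeffNormSq_shift, inv_pow, Real.sq_sqrt hN.le,
      inv_mul_cancel₀ hN.ne'])
    (fun u => α (t + u)) (hα.comp (measurable_const_add t)) (fun u => hα01 _) (by rwa [← hshift])
  have hscale : ∀ u, α (t + u) * (r⁻¹ * trigPoly ω c z (t + u)) ^ 2 =
      N⁻¹ * (α (t + u) * trigPoly ω c z (t + u) ^ 2) := fun u => by
    rw [mul_pow, inv_pow, Real.sq_sqrt hN.le]; ring
  simp only [trigPoly_smul, trigPoly_shift, hscale, intervalIntegral.integral_const_mul] at hq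
  rw [hshift, mul_comm]
  exact (le_inv_mul_iff₀ hN).mp hq

end TrigPoly

theorem Finset.sum_range_two_mul {M : Type*} [AddCommMonoid M] (f : ℕ → M) (n : ℕ) :
    ∑ k ∈ range (2 * n), f k = ∑ j ∈ range n, (f (2 * j) + f (2 * j + 1)) := by
  induction n with
  | zero => simp
  | succ n ih =>
    rw [show 2 * (n + 1) = 2 * n + 1 + 1 by ring, sum_range_succ, sum_range_succ, ih,
      sum_range_succ, add_assoc]

theorem sum_fin_add_eq_add_sum_pairs {M : Type*} [AddCommMonoid M] {j₀ : ℕ} (hj₀ : j₀ = 0 ∨ j₀ = 1)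
    (h : ℕ) (f : ℕ → M) (hf : j₀ = 1 → f 0 = 0) :
    ∑ i : Fin (2 * h + 1 - j₀), f (i + j₀) =
      f 0 + ∑ j : Fin h, (f (2 * j + 1) + f (2 * j + 2)) := by
  rw [Fin.sum_univ_eq_sum_range (fun k => f (k + j₀)), Fin.sum_univ_eq_sum_range
    (fun j => f (2 * j + 1) + f (2 * j + 2))]
  rcases hj₀ with rfl | rfl
  · rw [Nat.sub_zero, Finset.sum_range_succ', Finset.sum_range_two_mul, add_comm]
  · rw [Nat.add_sub_cancel, hf rfl, zero_add, Finset.sum_range_two_mul]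

section Pev

variable {j₀ h : ℕ}

def pevEntry (ω : ℕ → ℝ) (k : ℕ) (s : ℝ) : ℝ :=
  if k = 0 then 1
  else if k % 2 = 1 then Real.sin (ω ((k + 1) / 2) * s)
  else Real.cos (ω (k / 2) * s)

/-- The coefficients `a`, `b` of `sin (ω_{j+1} s)`, `cos (ω_{j+1} s)` sit at the indices
`2j + 1`, `2j + 2`, and `a sin θ + b cos θ = Re ((b - a i) e^{iθ})`. -/
def pairCoeff (h : ℕ) (a : ℕ → ℝ) (j : Fin h) : ℂ := a (2 * j + 2) - a (2 * j + 1) * I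

def extendFin (j₀ : ℕ) {n : ℕ} (x : Fin n → ℝ) : ℕ → ℝ :=
  Function.extend (fun i : Fin n => (i : ℕ) + j₀) x 0

theorem extendFin_add {n : ℕ} (x : Fin n → ℝ) (i : Fin n) : extendFin j₀ x (i + j₀) = x i :=
  ((add_left_injective j₀).comp Fin.val_injective).extend_apply x 0 i

theorem extendFin_one_zero {n : ℕ} (x : Fin n → ℝ) : extendFin 1 x 0 = 0 :=
  Function.extend_apply' _ _ _ (by simp)

theorem dotProduct_pev (hj₀ : j₀ = 0 ∨ j₀ = 1) (ω : ℕ → ℝ) (x : Fin (2 * h + 1 - j₀) → ℝ) (s : ℝ) :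
    x ⬝ᵥ pev j₀ h ω s =
      trigPoly (fun j : Fin h => ω (j + 1)) (extendFin j₀ x 0) (pairCoeff h (extendFin j₀ x))
        s := by
  have hpev : ∀ i, pev j₀ h ω s i = pevEntry ω (i + j₀) s := fun i => rfl
  have hsum := sum_fin_add_eq_add_sum_pairs hj₀ h (fun k => extendFin j₀ x k * pevEntry ω k s)
    (by rintro rfl; rw [extendFin_one_zero, zero_mul])
  simp only [extendFin_add, ← hpev] at hsum
  rw [dotProduct, hsum, trigPoly, pevEntry, if_pos rfl, mul_one]
  congr 1
  refine Finset.sum_congr rfl fun j _ => ?_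
  have h1 : (2 * (j : ℕ) + 1) % 2 = 1 := by omega
  have h2 : (2 * (j : ℕ) + 1 + 1) / 2 = j + 1 := by omega
  have h3 : (2 * (j : ℕ) + 2) / 2 = j + 1 := by omega
  rw [pevEntry, if_neg (by omega), if_pos h1, h2, pevEntry, if_neg (by omega), if_neg (by omega),
    h3, pairCoeff, ← ofReal_mul, exp_mul_I]
  simp only [← ofReal_cos, ← ofReal_sin, mul_re, sub_re, sub_im, ofReal_re, ofReal_im, mul_im,
    add_re, add_im, I_re, I_im]
  ring

theorem sum_sq_eq_coeffNormSq (hj₀ : j₀ = 0 ∨ j₀ = 1) (x : Fin (2 * h + 1 - j₀) → ℝ) :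
    ∑ i, x i ^ 2 = coeffNormSq (extendFin j₀ x 0) (pairCoeff h (extendFin j₀ x)) := by
  have hsum := sum_fin_add_eq_add_sum_pairs hj₀ h (fun k => extendFin j₀ x k ^ 2)
    (by rintro rfl; rw [extendFin_one_zero, sq, zero_mul])
  simp only [extendFin_add] at hsum
  rw [hsum, coeffNormSq]
  congr 1
  refine Finset.sum_congr rfl fun j _ => ?_
  rw [pairCoeff, Complex.sq_norm, Complex.normSq_apply]
  simp only [sub_re, ofReal_re, mul_re, I_re, mul_zero, ofReal_im, I_im, mul_one, sub_self,
    sub_zero, sub_im, mul_im, add_zero, zero_sub, mul_neg, neg_mul, neg_neg]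
  ring

end Pev

theorem matrix_pe_lower_bound_general (T μ : ℝ) (hμ : 0 < μ) (hμT : μ ≤ T)
    (j₀ h : ℕ) (hj₀ : j₀ = 0 ∨ j₀ = 1)
    (ω : ℕ → ℝ)
    (hω0 : ∀ j, j₀ ≤ j → j ≤ h → (ω j = 0 ↔ j = 0))
    (hωdist : ∀ j l, j₀ ≤ j → j ≤ h → j₀ ≤ l → l ≤ h → j ≠ l → ω j ≠ ω l ∧ ω j ≠ -ω l) :
    ∃ ξ > (0:ℝ), ∀ α : ℝ → ℝ, IsPESignal T μ α → ∀ t : ℝ, 0 ≤ t →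
      ∀ x : Fin (2 * h + 1 - j₀) → ℝ,
        ξ * (∑ i, (x i) ^ 2) ≤
          ∫ s in t..(t + T), α s * (dotProduct x (pev j₀ h ω s)) ^ 2 := by
  have hω : ∀ j : Fin h, ω (j + 1) ≠ 0 := fun j hj => by
    have := (hω0 (j + 1) (by omega) (by omega)).mp hj
    omega
  have hω' : Pairwise fun j l : Fin h => ω (j + 1) ≠ ω (l + 1) ∧ ω (j + 1) ≠ -ω (l + 1) :=
    fun j l hjl => hωdist _ _ (by omega) (by omega) (by omega) (by omega)
      (by simpa [Fin.val_inj] using hjl)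
  obtain ⟨ξ, hξ, hbound⟩ := exists_pos_mul_coeffNormSq_le_integral_mul_trigPoly_sq hω hω' hμ hμT
  refine ⟨ξ, hξ, fun α ⟨hα, hα01, hαμ⟩ t ht x => ?_⟩
  simp only [dotProduct_pev hj₀, sum_sq_eq_coeffNormSq hj₀]
  exact hbound α hα hα01 t (hαμ t ht) _ _

/-- Lemma 2(2), first part: under the stated conditions on the frequencies `ω_{j₀}, …, ω_h`,
there is `ξ > 0` (depending only on `T, μ` and the `ω_j`) such that for every `(T,μ)`-signal
`α` and every `t ≥ 0`, `∫_t^{t+T} α(τ) v(τ) v(τ)ᵀ dτ ≥ ξ Id` (equivalently, the associated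
quadratic form is bounded below by `ξ ‖x‖²`). -/
theorem matrix_pe_lower_bound (T μ : ℝ) (hμ : 0 < μ) (hμT : μ ≤ T)
    (j₀ h : ℕ) (hj₀ : j₀ = 0 ∨ j₀ = 1) (hh : 1 ≤ h) (hj₀h : j₀ ≤ h)
    (ω : ℕ → ℝ)
    (hω0 : ∀ j, j₀ ≤ j → j ≤ h → (ω j = 0 ↔ j = 0))
    (hωdist : ∀ j l, j₀ ≤ j → j ≤ h → j₀ ≤ l → l ≤ h → j ≠ l → ω j ≠ ω l ∧ ω j ≠ -ω l) :
    ∃ ξ > (0:ℝ), ∀ α : ℝ → ℝ, IsPESignal T μ α → ∀ t : ℝ, 0 ≤ t →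
      ∀ x : Fin (2 * h + 1 - j₀) → ℝ,
        ξ * (∑ i, (x i) ^ 2) ≤
          ∫ s in t..(t + T), α s * (dotProduct x (pev j₀ h ω s)) ^ 2 :=
  matrix_pe_lower_bound_general T μ hμ hμT j₀ h hj₀ ω hω0 hωdist
end
end

section
/- Let 0 < μ ≤ T, j₀ ∈ {0,1}, h ∈ ℕ, and let ω_{j₀},...,ω_h be real numbers with ω_j = 0 if and only if j = 0 and {ω_j, −ω_j} ≠ {ω_l, −ω_l} for j ≠ l. Let ξ > 0 be such that ∫_t^{t+T} α(τ)v(τ)v(τ)ᵀ dτ ≥ ξ Id_{2h+1−j₀} for every (T,μ)-signal α and every t ≥ 0. Let (α^{(n)})_{n∈ℕ} be a sequence of (T,μ)-signals, (ν_n) an increasing sequence of positive reals with ν_n → +∞, and define α^C_n(t) = α^{(n)}(ν_n t) v(ν_n t) v(ν_n t)ᵀ. Then every weak-star limit point C⋆ of (α^C_n) in L^∞([0,∞), M_{2h+1−j₀}(ℝ)) satisfies C⋆(t) ≥ (ξ/T) Id_{2h+1−j₀} for almost every t ≥ 0. -/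
/-!
Testing the weak-star convergence against indicators shows that the entries of `C⋆` are bounded
by `1` almost everywhere and that `∫_a^b xᵀ C⋆ x` is the limit of
`∫_a^b α⁽ⁿ⁾(ν_n s) (x ⬝ v(ν_n s))² ds = ν_n⁻¹ ∫_{ν_n a}^{ν_n b} α⁽ⁿ⁾ (x ⬝ v)²`.
The interval `[ν_n a, ν_n b]` contains `⌊ν_n (b - a) / T⌋` disjoint windows of length `T`, each
contributing at least `ξ |x|²`, so in the limit `∫_a^b xᵀ C⋆ x ≥ (b - a) ξ |x|² / T`. Lebesgue
differentiation turns this into the pointwise bound almost everywhere for each fixed `x`, and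
since the bound is a closed condition in `x`, a countable dense set of vectors gives it for all
`x` at once.
-/

open MeasureTheory Filter Matrix

noncomputable section

open Set Topology

section WeakStar

variable {α : Type*} [MeasurableSpace α] {μ : Measure α}

def TendstoWeakStar (μ : Measure α) (F : ℕ → α → ℝ) (f : α → ℝ) : Prop :=
  ∀ g : α → ℝ, Integrable g μ →
    Tendsto (fun k => ∫ t, F k t * g t ∂μ) atTop (𝓝 (∫ t, f t * g t ∂μ))

theorem ae_le_of_forall_setIntegral_le_mul [SigmaFinite μ] {f : α → ℝ} (hf : Measurable f)
    {c : ℝ} (h : ∀ A, MeasurableSet A → μ A < ⊤ → ∫ t in A, f t ∂μ ≤ c * μ.real A) :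
    ∀ᵐ t ∂μ, f t ≤ c := by
  -- `h` carries no information where `f` is not integrable (the integral is then `0`),
  -- hence the truncation to `|f| ≤ n`.
  have htrunc : ∀ n : ℕ, ∀ᵐ t ∂μ, |f t| ≤ n → f t ≤ c := by
    intro n
    set S := {t | |f t| ≤ n}
    have hS : MeasurableSet S := measurableSet_le hf.abs measurable_const
    have hint : ∀ A, MeasurableSet A → μ (A ∩ S) < ⊤ → IntegrableOn f (A ∩ S) μ := by
      intro A hA hμA
      refine Measure.integrableOn_of_bounded (M := n) hμA.ne hf.aestronglyMeasurable ?_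
      filter_upwards [ae_restrict_mem (hA.inter hS)] with t ht using ht.2
    have hnonneg : 0 ≤ᵐ[μ.restrict S] fun t => c - f t := by
      refine ae_nonneg_of_forall_setIntegral_nonneg_of_sigmaFinite (fun A hA hμA => ?_)
        (fun A hA hμA => ?_) <;>
        rw [Measure.restrict_apply hA] at hμA
      · rw [IntegrableOn, Measure.restrict_restrict hA]
        exact (integrableOn_const hμA.ne).sub (hint A hA hμA)
      · have hc : IntegrableOn (fun _ => c) (A ∩ S) μ := integrableOn_const hμA.ne
        rw [Measure.restrict_restrict hA, integral_sub hc (hint A hA hμA),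
          setIntegral_const, smul_eq_mul, sub_nonneg, mul_comm]
        exact h _ (hA.inter hS) hμA
    filter_upwards [(ae_restrict_iff' hS).1 hnonneg] with t ht hn using sub_nonneg.1 (ht hn)
  filter_upwards [ae_all_iff.2 htrunc] with t ht
  exact ht _ (Nat.le_ceil _)

namespace TendstoWeakStar

variable {F : ℕ → α → ℝ} {f : α → ℝ}

theorem tendsto_setIntegral (h : TendstoWeakStar μ F f) {A : Set α} (hA : MeasurableSet A)
    (hμA : μ A ≠ ⊤) : Tendsto (fun k => ∫ t in A, F k t ∂μ) atTop (𝓝 (∫ t in A, f t ∂μ)) := by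
  have hind (u : α → ℝ) : ∫ t, u t * A.indicator (fun _ => 1) t ∂μ = ∫ t in A, u t ∂μ := by
    rw [← integral_indicator hA]
    congr 1 with t
    by_cases ht : t ∈ A <;> simp [ht]
  have hg : Integrable (A.indicator fun _ => (1 : ℝ)) μ :=
    (integrable_indicator_iff hA).2 (integrableOn_const hμA)
  simpa only [hind] using h _ hg

theorem ae_abs_le [SigmaFinite μ] (h : TendstoWeakStar μ F f) (hf : Measurable f) {c : ℝ}
    (hF : ∀ k t, |F k t| ≤ c) : ∀ᵐ t ∂μ, |f t| ≤ c := by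
  have hset : ∀ A, MeasurableSet A → μ A < ⊤ → |∫ t in A, f t ∂μ| ≤ c * μ.real A :=
    fun A hA hμA => le_of_tendsto (h.tendsto_setIntegral hA hμA.ne).abs
      (Eventually.of_forall fun k => by
        simpa only [Real.norm_eq_abs] using norm_setIntegral_le_of_norm_le_const hμA fun t _ =>
          (Real.norm_eq_abs _).trans_le (hF k t))
  have hle : ∀ᵐ t ∂μ, f t ≤ c := ae_le_of_forall_setIntegral_le_mul hf fun A hA hμA =>
    (le_abs_self _).trans (hset A hA hμA)
  have hge : ∀ᵐ t ∂μ, -f t ≤ c := ae_le_of_forall_setIntegral_le_mul hf.neg fun A hA hμA => by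
    rw [Pi.neg_def, integral_neg]
    exact (neg_le_abs _).trans (hset A hA hμA)
  filter_upwards [hle, hge] with t h₁ h₂
  exact abs_le.2 ⟨neg_le.1 h₂, h₁⟩

theorem integrableOn [SigmaFinite μ] (h : TendstoWeakStar μ F f) (hf : Measurable f) {c : ℝ}
    (hF : ∀ k t, |F k t| ≤ c) {A : Set α} (hA : μ A ≠ ⊤) : IntegrableOn f A μ :=
  Measure.integrableOn_of_bounded hA hf.aestronglyMeasurable (ae_restrict_of_ae (h.ae_abs_le hf hF))

end TendstoWeakStar

variable {ι : Type*} [Fintype ι]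

theorem integrable_dotProduct_mulVec {M : α → Matrix ι ι ℝ}
    (hM : ∀ i j, Integrable (fun t => M t i j) μ) (x : ι → ℝ) :
    Integrable (fun t => x ⬝ᵥ (M t *ᵥ x)) μ := by
  simp only [dotProduct, mulVec, Finset.mul_sum]
  exact integrable_finsetSum _ fun i _ => integrable_finsetSum _ fun j _ =>
    ((hM i j).mul_const _).const_mul _

theorem integral_dotProduct_mulVec {M : α → Matrix ι ι ℝ}
    (hM : ∀ i j, Integrable (fun t => M t i j) μ) (x : ι → ℝ) :
    ∫ t, x ⬝ᵥ (M t *ᵥ x) ∂μ = x ⬝ᵥ ((fun i j => ∫ t, M t i j ∂μ : Matrix ι ι ℝ) *ᵥ x) := by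
  simp only [dotProduct, mulVec, Finset.mul_sum]
  rw [integral_finsetSum _ fun i _ => integrable_finsetSum _ fun j _ =>
    ((hM i j).mul_const _).const_mul _]
  refine Finset.sum_congr rfl fun i _ => ?_
  rw [integral_finsetSum _ fun j _ => ((hM i j).mul_const _).const_mul _]
  refine Finset.sum_congr rfl fun j _ => ?_
  rw [integral_const_mul, integral_mul_const]

theorem TendstoWeakStar.tendsto_setIntegral_dotProduct_mulVec {M : ℕ → α → Matrix ι ι ℝ}
    {C : α → Matrix ι ι ℝ} (h : ∀ i j, TendstoWeakStar μ (fun k t => M k t i j) (C · i j))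
    {A : Set α} (hA : MeasurableSet A) (hμA : μ A ≠ ⊤)
    (hM : ∀ k i j, IntegrableOn (M k · i j) A μ) (hC : ∀ i j, IntegrableOn (C · i j) A μ)
    (x : ι → ℝ) :
    Tendsto (fun k => ∫ t in A, x ⬝ᵥ (M k t *ᵥ x) ∂μ) atTop
      (𝓝 (∫ t in A, x ⬝ᵥ (C t *ᵥ x) ∂μ)) := by
  simp only [integral_dotProduct_mulVec (hM _), integral_dotProduct_mulVec hC]
  have hentries := tendsto_pi_nhds.2 fun i => tendsto_pi_nhds.2 fun j =>
    (h i j).tendsto_setIntegral hA hμA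
  exact ((continuous_const.dotProduct (continuous_id.matrix_mulVec continuous_const)).tendsto
    _).comp hentries

end WeakStar

theorem ae_forall_of_isClosed {α X : Type*} [MeasurableSpace α] {μ : Measure α}
    [TopologicalSpace X] [TopologicalSpace.SeparableSpace X] {P : α → X → Prop}
    (hP : ∀ a, IsClosed {x | P a x}) (h : ∀ x, ∀ᵐ a ∂μ, P a x) : ∀ᵐ a ∂μ, ∀ x, P a x := by
  obtain ⟨S, hSc, hSd⟩ := TopologicalSpace.exists_countable_dense X
  filter_upwards [(ae_ball_iff hSc).2 fun x _ => h x] with a ha x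
  have hclosure : closure S ⊆ {x | P a x} := (hP a).closure_subset_iff.2 ha
  exact hclosure (hSd.closure_eq ▸ mem_univ x)

section RealLine

theorem nat_floor_mul_le_intervalIntegral {F : ℝ → ℝ} {T m a b : ℝ} (hT : 0 < T) (hab : a ≤ b)
    (hF : ∀ t, 0 ≤ F t) (hFi : ∀ c d, IntervalIntegrable F volume c d)
    (hwin : ∀ t, a ≤ t → m ≤ ∫ s in t..t + T, F s) :
    ⌊(b - a) / T⌋₊ * m ≤ ∫ s in a..b, F s := by
  set N := ⌊(b - a) / T⌋₊
  have hNT : a + N * T ≤ b := by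
    have := Nat.floor_le (div_nonneg (sub_nonneg.2 hab) hT.le)
    rw [le_div_iff₀ hT] at this
    linarith
  have hwindows : ∑ k ∈ Finset.range N, ∫ s in a + k * T..a + (k + 1 : ℕ) * T, F s =
      ∫ s in a..a + N * T, F s := by
    simpa using intervalIntegral.sum_integral_adjacent_intervals
      (a := fun k : ℕ => a + k * T) fun k _ => hFi _ _
  calc (N : ℝ) * m = ∑ k ∈ Finset.range N, m := by simp
    _ ≤ ∑ k ∈ Finset.range N, ∫ s in a + k * T..a + (k + 1 : ℕ) * T, F s := by
      refine Finset.sum_le_sum fun k _ => ?_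
      rw [Nat.cast_succ, add_mul, one_mul, ← add_assoc]
      exact hwin _ (le_add_of_nonneg_right (by positivity))
    _ = ∫ s in a..a + N * T, F s := hwindows
    _ ≤ ∫ s in a..b, F s := by
      rw [← intervalIntegral.integral_add_adjacent_intervals (hFi a (a + N * T)) (hFi _ b)]
      exact le_add_of_nonneg_right (intervalIntegral.integral_nonneg hNT fun t _ => hF t)

theorem le_of_tendsto_intervalIntegral_comp_mul {G : ℕ → ℝ → ℝ} {ν : ℕ → ℝ} {T m a b L : ℝ}
    (hT : 0 < T) (ha : 0 ≤ a) (hab : a ≤ b) (hG : ∀ k t, 0 ≤ G k t)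
    (hGi : ∀ k c d, IntervalIntegrable (G k) volume c d)
    (hwin : ∀ k t, 0 ≤ t → m ≤ ∫ s in t..t + T, G k s) (hν : Tendsto ν atTop atTop)
    (hL : Tendsto (fun k => ∫ s in a..b, G k (ν k * s)) atTop (𝓝 L)) :
    m / T * (b - a) ≤ L := by
  have hcoef : Tendsto (fun k => ⌊(b - a) / T * ν k⌋₊ / ν k * m) atTop (𝓝 ((b - a) / T * m)) :=
    ((tendsto_nat_floor_mul_div_atTop (by bound)).comp hν).mul_const m
  refine le_of_tendsto_of_tendsto (by convert hcoef using 2; ring) hL ?_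
  filter_upwards [hν.eventually_gt_atTop 0] with k hk
  rw [intervalIntegral.integral_comp_mul_left _ hk.ne', smul_eq_mul, div_mul_eq_mul_div,
    div_le_iff₀ hk, mul_comm (ν k)⁻¹, inv_mul_cancel_right₀ hk.ne']
  have hwindows := nat_floor_mul_le_intervalIntegral hT (mul_le_mul_of_nonneg_left hab hk.le)
    (hG k) (hGi k) fun t ht => hwin k t ((mul_nonneg hk.le ha).trans ht)
  rwa [show (ν k * b - ν k * a) / T = (b - a) / T * ν k by ring] at hwindows

theorem ae_le_of_forall_mul_le_intervalIntegral {f : ℝ → ℝ} {c : ℝ}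
    (hf : ∀ b, 0 ≤ b → IntervalIntegrable f volume 0 b)
    (h : ∀ a b, 0 ≤ a → a ≤ b → c * (b - a) ≤ ∫ t in a..b, f t) :
    ∀ᵐ t ∂volume.restrict (Ici 0), c ≤ f t := by
  rw [← restrict_Ioi_eq_restrict_Ici, ae_restrict_iff' measurableSet_Ioi]
  filter_upwards [ae_all_iff.2 fun n : ℕ => (hf n n.cast_nonneg).ae_hasDerivAt_integral]
    with t ht htpos
  obtain ⟨n, hn⟩ := exists_nat_ge t
  have hderiv := (ht n ⟨inf_le_left.trans htpos.le, hn.trans le_sup_right⟩ 0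
    left_mem_uIcc).hasDerivWithinAt (s := Ioi t)
  refine ge_of_tendsto ((hasDerivWithinAt_iff_tendsto_slope' self_notMem_Ioi).1 hderiv) ?_
  filter_upwards [self_mem_nhdsWithin] with y (hy : t < y)
  rw [slope_def_field,
    intervalIntegral.integral_interval_sub_left (hf y (htpos.trans hy).le) (hf t htpos.le),
    le_div_iff₀ (sub_pos.2 hy)]
  exact h t y htpos.le hy.le

end RealLine

section WeightedGram

variable {ι : Type*}

def weightedGram (a : ℝ → ℝ) (v : ℝ → ι → ℝ) (t : ℝ) : Matrix ι ι ℝ :=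
  a t • vecMulVec (v t) (v t)

theorem abs_weightedGram_apply_le_one {a : ℝ → ℝ} {v : ℝ → ι → ℝ} {t : ℝ} (ha : a t ∈ Icc 0 1)
    (hv : ∀ i, |v t i| ≤ 1) (i j : ι) : |weightedGram a v t i j| ≤ 1 := by
  simp only [weightedGram, Matrix.smul_apply, vecMulVec_apply, smul_eq_mul, abs_mul,
    abs_of_nonneg ha.1]
  exact mul_le_one₀ ha.2 (by positivity) (mul_le_one₀ (hv i) (abs_nonneg _) (hv j))

theorem measurable_weightedGram_apply {a : ℝ → ℝ} {v : ℝ → ι → ℝ} (ha : Measurable a)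
    (hv : Continuous v) (i j : ι) : Measurable fun t => weightedGram a v t i j := by
  simp only [weightedGram, Matrix.smul_apply, vecMulVec_apply, smul_eq_mul]
  fun_prop

variable [Fintype ι]

theorem dotProduct_weightedGram_mulVec (a : ℝ → ℝ) (v : ℝ → ι → ℝ) (t : ℝ) (x : ι → ℝ) :
    x ⬝ᵥ (weightedGram a v t *ᵥ x) = a t * (x ⬝ᵥ v t) ^ 2 := by
  simp only [weightedGram, smul_mulVec, vecMulVec_mulVec, dotProduct_smul, smul_eq_mul,
    MulOpposite.smul_eq_mul_unop, MulOpposite.unop_op, dotProduct_comm (v t) x]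
  ring

variable {T ξ : ℝ} {α : ℕ → ℝ → ℝ} {v : ℝ → ι → ℝ} {ν : ℕ → ℝ} {C : ℝ → Matrix ι ι ℝ}

theorem mul_le_intervalIntegral_dotProduct_mulVec_of_tendstoWeakStar (hT : 0 < T)
    (hαm : ∀ k, Measurable (α k)) (hα : ∀ k t, α k t ∈ Icc 0 1)
    (hv : Continuous v) (hv1 : ∀ t i, |v t i| ≤ 1)
    (hPE : ∀ k t, 0 ≤ t → ∀ x, ξ * ∑ i, x i ^ 2 ≤ ∫ s in t..t + T, α k s * (x ⬝ᵥ v s) ^ 2)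
    (hν : Tendsto ν atTop atTop) (hCm : ∀ i j, Measurable (C · i j))
    (hC : ∀ i j, TendstoWeakStar (volume.restrict (Ici 0))
      (fun k s => weightedGram (α k) v (ν k * s) i j) (C · i j))
    (x : ι → ℝ) {a b : ℝ} (ha : 0 ≤ a) (hab : a ≤ b) :
    ξ / T * (∑ i, x i ^ 2) * (b - a) ≤ ∫ t in a..b, x ⬝ᵥ (C t *ᵥ x) := by
  have hsub : Ioc a b ⊆ Ici 0 := fun t ht => ha.trans ht.1.le
  have hfin : volume.restrict (Ici 0) (Ioc a b) ≠ ⊤ :=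
    ((Measure.restrict_apply_le _ _).trans_lt measure_Ioc_lt_top).ne
  have hlim := TendstoWeakStar.tendsto_setIntegral_dotProduct_mulVec hC measurableSet_Ioc hfin
    (fun k i j => Measure.integrableOn_of_bounded hfin
      ((measurable_weightedGram_apply (hαm k) hv i j).comp
        (measurable_const_mul _)).aestronglyMeasurable
      (ae_of_all _ fun s => abs_weightedGram_apply_le_one (hα _ _) (hv1 _) i j))
    (fun i j => (hC i j).integrableOn (hCm i j)
      (fun k s => abs_weightedGram_apply_le_one (hα _ _) (hv1 _) i j) hfin) x
  simp only [Measure.restrict_restrict_of_subset hsub, dotProduct_weightedGram_mulVec] at hlim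
  rw [← mul_div_right_comm]
  refine le_of_tendsto_intervalIntegral_comp_mul (G := fun k s => α k s * (x ⬝ᵥ v s) ^ 2) hT ha
    hab (fun k s => mul_nonneg (hα k s).1 (sq_nonneg _)) (fun k c d => ?_)
    (fun k t ht => hPE k t ht x) hν ?_
  · have hα_int : IntervalIntegrable (α k) volume c d :=
      intervalIntegrable_const.mono_fun' (hαm k).aestronglyMeasurable
        (ae_of_all _ fun t => by simpa [abs_of_nonneg (hα k t).1] using (hα k t).2)
    exact hα_int.mul_continuousOn (by fun_prop)
  · simpa only [intervalIntegral.integral_of_le hab] using hlim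

theorem ae_le_dotProduct_mulVec_of_tendstoWeakStar (hT : 0 < T)
    (hαm : ∀ k, Measurable (α k)) (hα : ∀ k t, α k t ∈ Icc 0 1)
    (hv : Continuous v) (hv1 : ∀ t i, |v t i| ≤ 1)
    (hPE : ∀ k t, 0 ≤ t → ∀ x, ξ * ∑ i, x i ^ 2 ≤ ∫ s in t..t + T, α k s * (x ⬝ᵥ v s) ^ 2)
    (hν : Tendsto ν atTop atTop) (hCm : ∀ i j, Measurable (C · i j))
    (hC : ∀ i j, TendstoWeakStar (volume.restrict (Ici 0))
      (fun k s => weightedGram (α k) v (ν k * s) i j) (C · i j)) (x : ι → ℝ) :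
    ∀ᵐ t ∂volume.restrict (Ici 0), ξ / T * ∑ i, x i ^ 2 ≤ x ⬝ᵥ (C t *ᵥ x) := by
  have hCint (b : ℝ) (i j : ι) : IntegrableOn (C · i j) (Ioc 0 b) := by
    have := (hC i j).integrableOn (hCm i j)
      (fun k s => abs_weightedGram_apply_le_one (hα _ _) (hv1 _) i j)
      ((Measure.restrict_apply_le _ _).trans_lt (measure_Ioc_lt_top (a := 0) (b := b))).ne
    rwa [IntegrableOn, Measure.restrict_restrict_of_subset
      (Ioc_subset_Ioi_self.trans Ioi_subset_Ici_self)] at this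
  refine ae_le_of_forall_mul_le_intervalIntegral (fun b hb => ?_) fun a b ha hab =>
    mul_le_intervalIntegral_dotProduct_mulVec_of_tendstoWeakStar hT hαm hα hv hv1 hPE hν hCm hC
      x ha hab
  exact (intervalIntegrable_iff_integrableOn_Ioc_of_le hb).2
    (integrable_dotProduct_mulVec (hCint b) x)

end WeightedGram

theorem continuous_pev (j₀ h : ℕ) (ω : ℕ → ℝ) : Continuous (pev j₀ h ω) :=
  continuous_pi fun i => by unfold pev; split_ifs <;> fun_prop

theorem abs_pev_le_one (j₀ h : ℕ) (ω : ℕ → ℝ) (t : ℝ) (i : Fin (2 * h + 1 - j₀)) :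
    |pev j₀ h ω t i| ≤ 1 := by
  unfold pev
  split_ifs
  · simp
  · exact Real.abs_sin_le_one _
  · exact Real.abs_cos_le_one _

theorem weakStar_limit_of_rescaled_matrix_signals_general (T μ : ℝ) (hμ : 0 < μ) (hμT : μ ≤ T)
    (j₀ h : ℕ)
    (ω : ℕ → ℝ)
    (ξ : ℝ)
    (hξPE : ∀ α : ℝ → ℝ, IsPESignal T μ α → ∀ t : ℝ, 0 ≤ t →
      ∀ x : Fin (2 * h + 1 - j₀) → ℝ,
        ξ * (∑ i, (x i) ^ 2) ≤
          ∫ s in t..(t + T), α s * (dotProduct x (pev j₀ h ω s)) ^ 2)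
    (α : ℕ → ℝ → ℝ) (hα : ∀ n, IsPESignal T μ (α n))
    (ν : ℕ → ℝ)
    (hνtop : Tendsto ν atTop atTop)
    (C : ℝ → Matrix (Fin (2 * h + 1 - j₀)) (Fin (2 * h + 1 - j₀)) ℝ)
    (hCmeas : ∀ i j, Measurable fun t => C t i j)
    (φ : ℕ → ℕ) (hφ : StrictMono φ)
    (hlim : ∀ g : ℝ → ℝ, IntegrableOn g (Set.Ici (0:ℝ)) →
      ∀ i j : Fin (2 * h + 1 - j₀),
        Tendsto (fun k => ∫ s in Set.Ici (0:ℝ),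
            (α (φ k) (ν (φ k) * s) * (pev j₀ h ω (ν (φ k) * s) i *
              pev j₀ h ω (ν (φ k) * s) j)) * g s) atTop
          (nhds (∫ s in Set.Ici (0:ℝ), C s i j * g s))) :
    ∀ᵐ t ∂(volume.restrict (Set.Ici (0:ℝ))),
      ∀ x : Fin (2 * h + 1 - j₀) → ℝ,
        (ξ / T) * (∑ i, (x i) ^ 2) ≤ dotProduct x ((C t).mulVec x) := by
  have hT : 0 < T := hμ.trans_le hμT
  refine ae_forall_of_isClosed (fun t => isClosed_le (by fun_prop) (by fun_prop)) ?_
  exact ae_le_dotProduct_mulVec_of_tendstoWeakStar (α := fun k => α (φ k))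
    (ν := fun k => ν (φ k)) hT (fun k => (hα (φ k)).1) (fun k => (hα (φ k)).2.1)
    (continuous_pev j₀ h ω) (abs_pev_le_one j₀ h ω) (fun k => hξPE _ (hα (φ k)))
    (hνtop.comp hφ.tendsto_atTop) hCmeas fun i j g hg => hlim g hg i j

/-- Lemma 2(2), second part: if `ξ > 0` is such that
`∫_t^{t+T} α(τ) v(τ)v(τ)ᵀ dτ ≥ ξ Id` for every `(T,μ)`-signal `α` and every `t ≥ 0`,
`α⁽ⁿ⁾` are `(T,μ)`-signals, `ν_n ↗ ∞`, `α^C_n(t) = α⁽ⁿ⁾(ν_n t) v(ν_n t) v(ν_n t)ᵀ`, and `C⋆`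
is a weak-star limit point (entrywise, along a subsequence `φ`) of `(α^C_n)` in
`L^∞([0,∞), M_{2h+1-j₀}(ℝ))`, then `C⋆(t) ≥ (ξ/T) Id` for almost every `t ≥ 0`. -/
theorem weakStar_limit_of_rescaled_matrix_signals (T μ : ℝ) (hμ : 0 < μ) (hμT : μ ≤ T)
    (j₀ h : ℕ) (hj₀ : j₀ = 0 ∨ j₀ = 1) (hh : 1 ≤ h) (hj₀h : j₀ ≤ h)
    (ω : ℕ → ℝ)
    (hω0 : ∀ j, j₀ ≤ j → j ≤ h → (ω j = 0 ↔ j = 0))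
    (hωdist : ∀ j l, j₀ ≤ j → j ≤ h → j₀ ≤ l → l ≤ h → j ≠ l → ω j ≠ ω l ∧ ω j ≠ -ω l)
    (ξ : ℝ) (hξ : 0 < ξ)
    (hξPE : ∀ α : ℝ → ℝ, IsPESignal T μ α → ∀ t : ℝ, 0 ≤ t →
      ∀ x : Fin (2 * h + 1 - j₀) → ℝ,
        ξ * (∑ i, (x i) ^ 2) ≤
          ∫ s in t..(t + T), α s * (dotProduct x (pev j₀ h ω s)) ^ 2)
    (α : ℕ → ℝ → ℝ) (hα : ∀ n, IsPESignal T μ (α n))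
    (ν : ℕ → ℝ) (hν0 : ∀ n, 0 < ν n) (hνmono : StrictMono ν)
    (hνtop : Tendsto ν atTop atTop)
    (C : ℝ → Matrix (Fin (2 * h + 1 - j₀)) (Fin (2 * h + 1 - j₀)) ℝ)
    (hCmeas : ∀ i j, Measurable fun t => C t i j)
    (φ : ℕ → ℕ) (hφ : StrictMono φ)
    (hlim : ∀ g : ℝ → ℝ, IntegrableOn g (Set.Ici (0:ℝ)) →
      ∀ i j : Fin (2 * h + 1 - j₀),
        Tendsto (fun k => ∫ s in Set.Ici (0:ℝ),
            (α (φ k) (ν (φ k) * s) * (pev j₀ h ω (ν (φ k) * s) i *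
              pev j₀ h ω (ν (φ k) * s) j)) * g s) atTop
          (nhds (∫ s in Set.Ici (0:ℝ), C s i j * g s))) :
    ∀ᵐ t ∂(volume.restrict (Set.Ici (0:ℝ))),
      ∀ x : Fin (2 * h + 1 - j₀) → ℝ,
        (ξ / T) * (∑ i, (x i) ^ 2) ≤ dotProduct x ((C t).mulVec x) :=
  weakStar_limit_of_rescaled_matrix_signals_general T μ hμ hμT j₀ h ω ξ hξPE α hα ν hνtop C hCmeas φ
    hφ hlim

end
end

section
/- For every positive integers h, r₁, every non-increasing sequence of non-negative integers m₁ ≥ m₂ ≥ ... ≥ m_{r₁} with m₁ ≤ h, and every ξ > 0, there exist λ > 0, positive reals k̄₁,...,k̄_{r₁}, and a symmetric positive definite 2hr₁ × 2hr₁ real matrix S such that the following holds: for every measurable C⋆ : [0,∞) → M_{2h}(ℝ) with C⋆(t) symmetric and ξ Id_{2h} ≤ C⋆(t) ≤ Id_{2h} for almost every t, every locally absolutely continuous function Y = (Y₁,...,Y_{r₁}) : [0,∞) → E^h_{m₁,...,m_{r₁}} satisfying Ẏ_l(t) = Y_{l+1}(t) − k̄_l p_l C⋆(t) Y₁(t)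 for l = 1,...,r₁ (with the convention Y_{r₁+1} = 0) for almost every t, satisfies d/dt (Y(t)ᵀ S Y(t)) ≤ −λ ‖Y(t)‖² for almost every t ≥ 0. -/
open MeasureTheory Filter Matrix

noncomputable section

/-- The orthogonal projection `p_m = diag(Id_{2m}, 0)` of `ℝ^{2h}` onto `ℝ^{2m} × {0}`. -/
def projP (h m : ℕ) : Matrix (Fin (2 * h)) (Fin (2 * h)) ℝ :=
  Matrix.of fun i j => if i = j ∧ (i : ℕ) < 2 * m then 1 else 0

/-!
The diagonal projections decouple the system into `2h` scalar chains, one per coordinate `i`: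
the column `u = (Y_{l,i})_l` is supported on the first `n_i` indices (the `l` with `i < 2 m_l`,
an initial segment since `m` is non-increasing) and satisfies `u̇_l = u_{l+1} - k̄_l ζ_i` there,
where `ζ = C⋆ Y₁`. We take `S` block diagonal, with a tridiagonal block `T_{n_i}` for column `i`,
gains `k̄_l = K^{-l²}` and off-diagonal entries `-b_l`, `b_l = β K^{l(2l+1)}`, `β = 32/ξ`.
The diagonal of `T_n` is chosen so that `T_n k̄ = e₀/2` on the active indices; the injection terms
then add up to `-Y₁ᵀ C⋆ Y₁ ≤ -ξ ‖Y₁‖²`. What remains is `2 uᵀ T_n (u_{l+1})_l`: its diagonal part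
`-2 ∑ b_l u_{l+1}²` controls every coordinate but `u₀`, which is paid for by the slack `ξ u₀²`
above, and since `b_l` grows fast enough the cross terms are absorbed by weighted Young
inequalities.
-/

open Finset

namespace Matrix

lemma dotProduct_blockDiagonal_mulVec {R m ι : Type*} [NonUnitalNonAssocSemiring R] [Fintype m]
    [Fintype ι] [DecidableEq ι] (M : ι → Matrix m m R) (x y : m × ι → R) :
    x ⬝ᵥ blockDiagonal M *ᵥ y = ∑ i, (fun l => x (l, i)) ⬝ᵥ M i *ᵥ fun l => y (l, i) := by
  simp only [dotProduct, mulVec, blockDiagonal_apply, Fintype.sum_prod_type, mul_sum, ite_mul,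
    zero_mul, sum_ite_eq, mem_univ]
  exact sum_comm

lemma PosDef.blockDiagonal {R m ι : Type*} [Ring R] [PartialOrder R] [StarRing R]
    [IsOrderedAddMonoid R] [Fintype m] [Fintype ι] [DecidableEq ι] {M : ι → Matrix m m R}
    (hM : ∀ i, (M i).PosDef) : (blockDiagonal M).PosDef := by
  refine PosDef.of_dotProduct_mulVec_pos
    (isHermitian_blockDiagonal_iff.2 fun i => (hM i).isHermitian) fun x hx => ?_
  obtain ⟨⟨l, i⟩, hli⟩ := Function.ne_iff.1 hx
  rw [dotProduct_blockDiagonal_mulVec]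
  refine sum_pos' (fun j _ => (hM j).posSemidef.dotProduct_mulVec_nonneg _) ⟨i, mem_univ _, ?_⟩
  exact (hM i).dotProduct_mulVec_pos fun h => hli (congrFun h l)

lemma PosSemidef.mul_sum_sq_le {ι : Type*} [Fintype ι] [DecidableEq ι] {C : Matrix ι ι ℝ}
    {ξ : ℝ} (hC : (C - ξ • 1).PosSemidef) (y : ι → ℝ) :
    ξ * ∑ i, y i ^ 2 ≤ ∑ i, (C *ᵥ y) i * y i := by
  have h := hC.dotProduct_mulVec_nonneg y
  rw [star_trivial, sub_mulVec, dotProduct_sub, smul_mulVec, one_mulVec, dotProduct_smul,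
    smul_eq_mul, sub_nonneg] at h
  simpa only [dotProduct, sq, mul_sum, mul_comm] using h

end Matrix

lemma HasDerivAt.dotProduct_mulVec_self {𝕜 ι : Type*} [NontriviallyNormedField 𝕜] [Fintype ι]
    {A : Matrix ι ι 𝕜} (hA : A.IsSymm) {x : 𝕜 → ι → 𝕜} {x' : ι → 𝕜} {t : 𝕜}
    (hx : HasDerivAt x x' t) :
    HasDerivAt (fun s => x s ⬝ᵥ A *ᵥ x s) (2 * (x t ⬝ᵥ A *ᵥ x')) t := by
  have hcoord : ∀ i, HasDerivAt (fun s => x s i) (x' i) t := hasDerivAt_pi.1 hx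
  have hAx : ∀ i, HasDerivAt (fun s => (A *ᵥ x s) i) ((A *ᵥ x') i) t := fun i =>
    HasDerivAt.fun_sum fun j _ => (hcoord j).const_mul (A i j)
  have h : HasDerivAt (fun s => ∑ i, x s i * (A *ᵥ x s) i)
      (∑ i, (x' i * (A *ᵥ x t) i + x t i * (A *ᵥ x') i)) t :=
    HasDerivAt.fun_sum fun i _ => (hcoord i).mul (hAx i)
  have hsymm : x' ⬝ᵥ A *ᵥ x t = x t ⬝ᵥ A *ᵥ x' := by
    conv_lhs => rw [← hA.eq]
    exact dotProduct_transpose_mulVec A x' (x t)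
  refine h.congr_deriv ?_
  rw [sum_add_distrib]
  change x' ⬝ᵥ A *ᵥ x t + x t ⬝ᵥ A *ᵥ x' = _
  rw [hsymm]; ring

lemma Fin.lt_card_filter_iff_of_antitone {r : ℕ} {p : Fin r → Prop} [DecidablePred p]
    (hp : Antitone p) (l : Fin r) : (l : ℕ) < #{l | p l} ↔ p l := by
  constructor
  · intro hl
    by_contra hpl
    have : #{l | p l} ≤ #(Iio l) := card_le_card fun l' hl' => by
      simp only [mem_filter, mem_univ, true_and] at hl'
      exact mem_Iio.2 (lt_of_not_ge fun h => hpl (hp h hl'))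
    rw [Fin.card_Iio] at this
    omega
  · intro hpl
    have : #(Iic l) ≤ #{l | p l} := card_le_card fun l' hl' => by
      simpa using hp (mem_Iic.1 hl') hpl
    rw [Fin.card_Iic] at this
    omega

lemma projP_mulVec_apply (h m : ℕ) (v : Fin (2 * h) → ℝ) (i : Fin (2 * h)) :
    (projP h m *ᵥ v) i = if (i : ℕ) < 2 * m then v i else 0 := by
  simp [projP, mulVec, dotProduct, ite_and]

lemma apply_eq_zero_of_projP_mulVec_eq {h m : ℕ} {v : Fin (2 * h) → ℝ} (hv : projP h m *ᵥ v = v)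
    {i : Fin (2 * h)} (hi : 2 * m ≤ i) : v i = 0 := by
  have := congrFun hv i
  rwa [projP_mulVec_apply, if_neg hi.not_gt, eq_comm] at this

namespace ProjectedLyapunov

lemma mul_mul_le_of_sq_le {c p q : ℝ} (hp : 0 ≤ p) (hq : 0 ≤ q) (h : c ^ 2 ≤ 4 * p * q)
    (x y : ℝ) : c * (x * y) ≤ p * x ^ 2 + q * y ^ 2 := by
  rcases hp.eq_or_lt with rfl | hp
  · obtain rfl : c = 0 := by nlinarith
    nlinarith
  · nlinarith [sq_nonneg (2 * p * x - c * y), sq_nonneg y]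

lemma sum_range_add_le_sum_range {G : ℕ → ℝ} {N : ℕ} (hG : ∀ l, 0 ≤ G l)
    (hGN : ∀ l, N ≤ l → G l = 0) (j : ℕ) :
    ∑ l ∈ range N, G (l + j) ≤ ∑ l ∈ range N, G l := by
  have hsplit := sum_range_add G j N
  rw [add_comm j N, sum_range_add G N j,
    sum_eq_zero (s := range j) (f := fun l => G (N + l)) fun l _ => hGN _ (by omega), add_zero]
    at hsplit
  have : 0 ≤ ∑ l ∈ range j, G l := sum_nonneg fun l _ => hG l
  simp only [add_comm _ j]
  linarith

/-- Young's inequality along a chain: the cross terms `a_l u_l u_{l+1}` and `-g_{l+1} u_l u_{l+2}`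
each take at most an eighth of the weights `g` at their two ends. -/
lemma two_mul_sum_chain_le {a g u : ℕ → ℝ} {N : ℕ} (hg : ∀ l, 0 ≤ g l)
    (ha : ∀ l, 16 * a l ^ 2 ≤ g l * g (l + 1)) (hg2 : ∀ l, 16 * g (l + 1) ^ 2 ≤ g l * g (l + 2))
    (hu : ∀ l, N ≤ l → u l = 0) :
    2 * ∑ l ∈ range N, (a l * u l * u (l + 1) - g (l + 1) * (u l * u (l + 2) + u (l + 1) ^ 2))
      ≤ 2 * g 0 * u 0 ^ 2 - ∑ l ∈ range N, g l * u l ^ 2 := by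
  set G : ℕ → ℝ := fun l => g l / 8 * u l ^ 2
  have hG : ∀ l, 0 ≤ G l := fun l => by positivity [hg l]
  have hGN : ∀ l, N ≤ l → G l = 0 := fun l hl => by simp [G, hu l hl]
  have hcross₁ : ∑ l ∈ range N, a l * (u l * u (l + 1))
      ≤ ∑ l ∈ range N, G l + ∑ l ∈ range N, G (l + 1) := by
    rw [← sum_add_distrib]
    exact sum_le_sum fun l _ => mul_mul_le_of_sq_le (by positivity [hg l])
      (by positivity [hg (l + 1)]) (by linarith [ha l]) _ _
  have hcross₂ : ∑ l ∈ range N, -g (l + 1) * (u l * u (l + 2))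
      ≤ ∑ l ∈ range N, G l + ∑ l ∈ range N, G (l + 2) := by
    rw [← sum_add_distrib]
    exact sum_le_sum fun l _ => mul_mul_le_of_sq_le (by positivity [hg l])
      (by positivity [hg (l + 2)]) (by linarith [hg2 l]) _ _
  have hdiag : ∑ l ∈ range N, g (l + 1) * u (l + 1) ^ 2
      = ∑ l ∈ range N, g l * u l ^ 2 - g 0 * u 0 ^ 2 := by
    have h := sum_range_succ' (fun l => g l * u l ^ 2) N
    rw [sum_range_succ, hu N le_rfl] at h
    linarith
  have hshift₁ := sum_range_add_le_sum_range hG hGN 1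
  have hshift₂ := sum_range_add_le_sum_range hG hGN 2
  have hGsum : ∑ l ∈ range N, g l * u l ^ 2 = 8 * ∑ l ∈ range N, G l := by
    simp only [G, mul_sum]; exact sum_congr rfl fun l _ => by ring
  have hsplit : ∑ l ∈ range N,
        (a l * u l * u (l + 1) - g (l + 1) * (u l * u (l + 2) + u (l + 1) ^ 2))
      = ∑ l ∈ range N, a l * (u l * u (l + 1)) + ∑ l ∈ range N, -g (l + 1) * (u l * u (l + 2))
        - ∑ l ∈ range N, g (l + 1) * u (l + 1) ^ 2 := by
    rw [← sum_add_distrib, ← sum_sub_distrib]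
    exact sum_congr rfl fun l _ => by ring
  linarith

section Tridiagonal

variable {r : ℕ} (d b : ℕ → ℝ)

def triEntry (l l' : ℕ) : ℝ :=
  (if l = l' then d l else 0) - (if l + 1 = l' then b l else 0) - (if l' + 1 = l then b l' else 0)

def triForm (N : ℕ) (u v : ℕ → ℝ) : ℝ :=
  ∑ l ∈ range N, (d l * u l * v l - b l * (u l * v (l + 1) + u (l + 1) * v l))

variable {d b}

lemma triEntry_comm (l l' : ℕ) : triEntry d b l l' = triEntry d b l' l := by
  unfold triEntry
  by_cases h : l = l'
  · subst h; ring
  · rw [if_neg h, if_neg (Ne.symm h)]; ring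

lemma sum_range_sum_range_triEntry {N : ℕ} {u v : ℕ → ℝ} (hu : ∀ l, N ≤ l → u l = 0)
    (hv : ∀ l, N ≤ l → v l = 0) :
    ∑ l ∈ range N, ∑ l' ∈ range N, triEntry d b l l' * (u l * v l') = triForm d b N u v := by
  simp only [triEntry, sub_mul, ite_mul, zero_mul, sum_sub_distrib]
  rw [sum_comm (f := fun l l' => if l' + 1 = l then b l' * (u l * v l') else 0)]
  simp only [sum_ite_eq, mem_range]
  rw [triForm, ← sum_sub_distrib, ← sum_sub_distrib]
  refine sum_congr rfl fun l hl => ?_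
  rw [if_pos (mem_range.1 hl)]
  by_cases h : l + 1 < N
  · rw [if_pos h, if_pos h]; ring
  · rw [if_neg h, if_neg h, hu (l + 1) (by omega), hv (l + 1) (by omega)]; ring

lemma triForm_sub_mul_right {N : ℕ} (u v w : ℕ → ℝ) (c : ℝ) :
    triForm d b N u (fun l => v l - c * w l) = triForm d b N u v - c * triForm d b N u w := by
  simp only [triForm, mul_sum, ← sum_sub_distrib]
  exact sum_congr rfl fun l _ => by ring

lemma sum_range_half_mul_sq_le_triForm {N : ℕ} {u : ℕ → ℝ} (hd : ∀ l, 0 ≤ d l)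
    (hb : ∀ l, 16 * b l ^ 2 ≤ d l * d (l + 1)) (hu : ∀ l, N ≤ l → u l = 0) :
    ∑ l ∈ range N, d l / 2 * u l ^ 2 ≤ triForm d b N u u := by
  set G : ℕ → ℝ := fun l => d l / 4 * u l ^ 2
  have hcross : ∑ l ∈ range N, 2 * b l * (u l * u (l + 1))
      ≤ ∑ l ∈ range N, G l + ∑ l ∈ range N, G (l + 1) := by
    rw [← sum_add_distrib]
    refine sum_le_sum fun l _ => mul_mul_le_of_sq_le (by positivity [hd l])
      (by positivity [hd (l + 1)]) ?_ _ _
    nlinarith [hb l]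
  have hshift := sum_range_add_le_sum_range (G := G) (N := N) (fun l => by positivity [hd l])
    (fun l hl => by simp [G, hu l hl]) 1
  have hsplit : triForm d b N u u
      = 4 * ∑ l ∈ range N, G l - ∑ l ∈ range N, 2 * b l * (u l * u (l + 1)) := by
    simp only [triForm, G, mul_sum, ← sum_sub_distrib]
    exact sum_congr rfl fun l _ => by ring
  have : ∑ l ∈ range N, d l / 2 * u l ^ 2 = 2 * ∑ l ∈ range N, G l := by
    simp only [G, mul_sum]; exact sum_congr rfl fun l _ => by ring
  linarith

def zeroExtend (x : Fin r → ℝ) (l : ℕ) : ℝ := if h : l < r then x ⟨l, h⟩ else 0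

lemma zeroExtend_val (x : Fin r → ℝ) (l : Fin r) : zeroExtend x l = x l := by
  simp [zeroExtend]

lemma zeroExtend_of_le (x : Fin r → ℝ) {l : ℕ} (hl : r ≤ l) : zeroExtend x l = 0 := by
  simp [zeroExtend, hl.not_gt]

variable (r d b) in
def triMatrix : Matrix (Fin r) (Fin r) ℝ := Matrix.of fun l l' => triEntry d b l l'

lemma triMatrix_isSymm : (triMatrix r d b).IsSymm :=
  IsSymm.ext fun l l' => triEntry_comm (l' : ℕ) l

lemma dotProduct_triMatrix_mulVec (x y : Fin r → ℝ) :
    x ⬝ᵥ triMatrix r d b *ᵥ y = triForm d b r (zeroExtend x) (zeroExtend y) := by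
  rw [← sum_range_sum_range_triEntry (fun l => zeroExtend_of_le x) (fun l => zeroExtend_of_le y)]
  simp only [dotProduct, mulVec, triMatrix, of_apply, mul_sum]
  rw [← Fin.sum_univ_eq_sum_range]
  refine sum_congr rfl fun l _ => ?_
  rw [← Fin.sum_univ_eq_sum_range]
  refine sum_congr rfl fun l' _ => ?_
  rw [zeroExtend_val, zeroExtend_val]; ring

lemma triMatrix_posDef (hd : ∀ l, 0 < d l) (hb : ∀ l, 16 * b l ^ 2 ≤ d l * d (l + 1)) :
    (triMatrix r d b).PosDef := by
  refine PosDef.of_dotProduct_mulVec_pos (isHermitian_iff_isSymm.2 triMatrix_isSymm)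
    fun x hx => ?_
  obtain ⟨l, hl⟩ := Function.ne_iff.1 hx
  rw [star_trivial, dotProduct_triMatrix_mulVec]
  refine lt_of_lt_of_le ?_ (sum_range_half_mul_sq_le_triForm (fun l => (hd l).le) hb
    fun l => zeroExtend_of_le x)
  rw [← Fin.sum_univ_eq_sum_range (fun l => d l / 2 * zeroExtend x l ^ 2)]
  refine sum_pos' (fun l _ => by positivity [hd l]) ⟨l, mem_univ _, ?_⟩
  rw [zeroExtend_val]
  exact mul_pos (half_pos (hd l)) (sq_pos_of_ne_zero hl)

end Tridiagonal

section Constants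

variable (β : ℝ)

/-- The growth factor `K`; any `K ≥ max 64 (32 β)` would do. -/
def base : ℝ := 32 * β + 64

def gain (l : ℕ) : ℝ := (base β ^ l ^ 2)⁻¹

def coupling (l : ℕ) : ℝ := β * base β ^ (l * (2 * l + 1))

/-- The diagonal entries are forced by `T_n (activeGain n) = e₀/2` on the active rows `l < n`:
row `l` uses `diagInner l` if `l + 1 < n` and `diagLast l` if `l + 1 = n`. -/
def diagLast : ℕ → ℝ
  | 0 => 1 / 2
  | l + 1 => coupling β l * gain β l / gain β (l + 1)

def diagInner (l : ℕ) : ℝ := diagLast β l + coupling β l * gain β (l + 1) / gain β l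

def diagEntry (n l : ℕ) : ℝ := if l + 1 = n then diagLast β l else diagInner β l

def activeGain (n l : ℕ) : ℝ := if l < n then gain β l else 0

/-- `weight (l + 1) = b_l` is the coefficient of `-u_{l+1}²` in `uᵀ T_n (u_{l+1})_l`, and
`weight 0 = 16 / β`, which is `ξ / 2` for `β = 32 / ξ`, is half the injection slack `ξ u₀²`. -/
def weight : ℕ → ℝ
  | 0 => 16 / β
  | l + 1 => coupling β l

def rate : ℝ := min (16 / β) β

variable {β}

lemma base_pos (hβ : 0 < β) : 0 < base β := by unfold base; linarith

lemma gain_pos (hβ : 0 < β) (l : ℕ) : 0 < gain β l := by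
  have := base_pos hβ; unfold gain; positivity

lemma gain_div_gain_succ (hβ : 0 < β) (l : ℕ) :
    gain β l / gain β (l + 1) = base β ^ (2 * l + 1) := by
  have := base_pos hβ
  rw [gain, gain, show (l + 1) ^ 2 = l ^ 2 + (2 * l + 1) by ring, pow_add]
  field_simp

lemma coupling_succ (l : ℕ) : coupling β (l + 1) = coupling β l * base β ^ (4 * l + 3) := by
  rw [coupling, coupling, mul_assoc, ← pow_add]; ring_nf

lemma coupling_pos (hβ : 0 < β) (l : ℕ) : 0 < coupling β l := by
  have := base_pos hβ; unfold coupling; positivity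

lemma le_coupling (hβ : 0 < β) (l : ℕ) : β ≤ coupling β l :=
  le_mul_of_one_le_right hβ.le (one_le_pow₀ (by unfold base; linarith))

lemma diagLast_succ (hβ : 0 < β) (l : ℕ) :
    diagLast β (l + 1) = coupling β l * base β ^ (2 * l + 1) := by
  rw [diagLast, mul_div_assoc, gain_div_gain_succ hβ]

lemma diagInner_zero : diagInner β 0 = 1 / 2 + β / base β := by
  simp [diagInner, diagLast, coupling, gain, div_eq_mul_inv]

lemma diagInner_succ (hβ : 0 < β) (l : ℕ) :
    diagInner β (l + 1) = coupling β l * base β ^ (2 * l) * (base β + 1) := by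
  have := base_pos hβ
  rw [diagInner, diagLast_succ hβ, coupling_succ, mul_div_assoc, ← inv_div,
    gain_div_gain_succ hβ (l + 1)]
  field_simp
  ring

lemma diagInner_mul_gain (hβ : 0 < β) (l : ℕ) :
    diagInner β l * gain β l = diagLast β l * gain β l + coupling β l * gain β (l + 1) := by
  have := gain_pos hβ l
  rw [diagInner]; field_simp

lemma diagLast_succ_mul_gain (hβ : 0 < β) (l : ℕ) :
    diagLast β (l + 1) * gain β (l + 1) = coupling β l * gain β l := by
  have := gain_pos hβ (l + 1)
  rw [diagLast]; field_simp

lemma diagLast_pos (hβ : 0 < β) (l : ℕ) : 0 < diagLast β l := by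
  cases l with
  | zero => norm_num [diagLast]
  | succ l => have := base_pos hβ; rw [diagLast_succ hβ]; positivity [coupling_pos hβ l]

lemma diagLast_le_diagEntry (hβ : 0 < β) (n l : ℕ) : diagLast β l ≤ diagEntry β n l := by
  unfold diagEntry diagInner
  split_ifs
  · rfl
  · have := coupling_pos hβ l; have := gain_pos hβ l; have := gain_pos hβ (l + 1)
    simp only [le_add_iff_nonneg_right]; positivity

lemma diagEntry_pos (hβ : 0 < β) (n l : ℕ) : 0 < diagEntry β n l :=
  (diagLast_pos hβ l).trans_le (diagLast_le_diagEntry hβ n l)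

lemma coupling_sq_le_diagLast (hβ : 0 < β) (l : ℕ) :
    16 * coupling β l ^ 2 ≤ diagLast β l * diagLast β (l + 1) := by
  cases l with
  | zero =>
    rw [diagLast_succ hβ]
    simp only [diagLast, coupling]
    norm_num [base]; nlinarith
  | succ l =>
    have := coupling_pos hβ l
    have h16 : (16 : ℝ) ≤ base β := by unfold base; linarith
    have : 0 ≤ coupling β l ^ 2 * base β ^ (8 * l + 6) := by positivity
    rw [diagLast_succ hβ, diagLast_succ hβ, coupling_succ]
    calc 16 * (coupling β l * base β ^ (4 * l + 3)) ^ 2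
        = 16 * (coupling β l ^ 2 * base β ^ (8 * l + 6)) := by ring
      _ ≤ base β * (coupling β l ^ 2 * base β ^ (8 * l + 6)) := by gcongr
      _ = _ := by ring

lemma coupling_sq_le_diagEntry (hβ : 0 < β) (n l : ℕ) :
    16 * coupling β l ^ 2 ≤ diagEntry β n l * diagEntry β n (l + 1) :=
  (coupling_sq_le_diagLast hβ l).trans <| mul_le_mul (diagLast_le_diagEntry hβ n l)
    (diagLast_le_diagEntry hβ n (l + 1)) (diagLast_pos hβ _).le (diagEntry_pos hβ n l).le

lemma diagInner_sq_le_weight (hβ : 0 < β) (l : ℕ) :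
    16 * diagInner β l ^ 2 ≤ weight β l * weight β (l + 1) := by
  have hK := base_pos hβ
  cases l with
  | zero =>
    have : 2 * β ≤ base β := by unfold base; linarith
    rw [diagInner_zero]
    simp only [weight, coupling]
    norm_num
    field_simp
    nlinarith
  | succ l =>
    have hK64 : (64 : ℝ) ≤ base β := by unfold base; linarith
    have := coupling_pos hβ l
    have : 0 ≤ coupling β l ^ 2 * base β ^ (4 * l) := by positivity
    have hcube : 16 * (base β + 1) ^ 2 ≤ base β ^ 3 := by nlinarith
    simp only [weight]
    rw [diagInner_succ hβ, coupling_succ]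
    calc 16 * (coupling β l * base β ^ (2 * l) * (base β + 1)) ^ 2
        = (coupling β l ^ 2 * base β ^ (4 * l)) * (16 * (base β + 1) ^ 2) := by ring
      _ ≤ (coupling β l ^ 2 * base β ^ (4 * l)) * base β ^ 3 := by gcongr
      _ = _ := by ring

lemma weight_sq_le (hβ : 0 < β) (l : ℕ) :
    16 * weight β (l + 1) ^ 2 ≤ weight β l * weight β (l + 2) := by
  have hK := base_pos hβ
  cases l with
  | zero =>
    have hβK : β ≤ base β := by unfold base; linarith
    have h1 : (1 : ℝ) ≤ base β := by unfold base; linarith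
    simp only [weight, coupling]
    field_simp
    norm_num
    nlinarith [mul_le_mul hβK hβK hβ.le hK.le, mul_le_mul_of_nonneg_left h1 (sq_nonneg (base β))]
  | succ l =>
    have h16 : (16 : ℝ) ≤ base β ^ 4 := by
      have : (2 : ℝ) ≤ base β := by unfold base; linarith
      nlinarith [pow_le_pow_left₀ (by norm_num) this 4]
    have := coupling_pos hβ l
    have : 0 ≤ coupling β l ^ 2 * base β ^ (8 * l + 6) := by positivity
    simp only [weight]
    rw [coupling_succ, coupling_succ, coupling_succ]
    calc 16 * (coupling β l * base β ^ (4 * l + 3)) ^ 2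
        = (coupling β l ^ 2 * base β ^ (8 * l + 6)) * 16 := by ring
      _ ≤ (coupling β l ^ 2 * base β ^ (8 * l + 6)) * base β ^ 4 := by gcongr
      _ = _ := by ring

lemma rate_pos (hβ : 0 < β) : 0 < rate β := lt_min (by positivity) hβ

lemma rate_le_weight (hβ : 0 < β) (l : ℕ) : rate β ≤ weight β l := by
  cases l with
  | zero => exact min_le_left _ _
  | succ l => exact (min_le_right _ _).trans (le_coupling hβ l)

end Constants

section Column

variable {β : ℝ} {n N : ℕ} {u : ℕ → ℝ}

lemma triForm_diagEntry_shift (hu : ∀ l, n ≤ l → u l = 0) :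
    triForm (diagEntry β n) (coupling β) N u (fun l => u (l + 1))
      = ∑ l ∈ range N, (diagInner β l * u l * u (l + 1)
          - weight β (l + 1) * (u l * u (l + 2) + u (l + 1) ^ 2)) := by
  refine sum_congr rfl fun l _ => ?_
  have hdiag : diagEntry β n l * u l * u (l + 1) = diagInner β l * u l * u (l + 1) := by
    unfold diagEntry
    split_ifs with h
    · rw [hu (l + 1) h.ge]; ring
    · rfl
  rw [hdiag, weight]
  ring

lemma two_mul_triForm_shift_le (hβ : 0 < β) (hu : ∀ l, n ≤ l → u l = 0) (hnN : n ≤ N) :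
    2 * triForm (diagEntry β n) (coupling β) N u (fun l => u (l + 1))
      ≤ 32 / β * u 0 ^ 2 - rate β * ∑ l ∈ range N, u l ^ 2 := by
  have hchain := two_mul_sum_chain_le (fun l => (rate_pos hβ).le.trans (rate_le_weight hβ l))
    (diagInner_sq_le_weight hβ) (weight_sq_le hβ) (fun l hl => hu l (hnN.trans hl))
  have hrate : rate β * ∑ l ∈ range N, u l ^ 2 ≤ ∑ l ∈ range N, weight β l * u l ^ 2 := by
    rw [mul_sum]
    exact sum_le_sum fun l _ => mul_le_mul_of_nonneg_right (rate_le_weight hβ l) (sq_nonneg _)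
  have h0 : 2 * weight β 0 = 32 / β := by simp only [weight]; ring
  rw [h0] at hchain
  rw [triForm_diagEntry_shift hu]
  linarith

lemma triForm_activeGain (hβ : 0 < β) (hu : ∀ l, n ≤ l → u l = 0) (hnN : n ≤ N) :
    triForm (diagEntry β n) (coupling β) N u (activeGain β n) = u 0 / 2 := by
  set w : ℕ → ℝ := fun l => if l < n then u l * (diagLast β l * gain β l) else 0
  have htelescope : ∀ l, diagEntry β n l * u l * activeGain β n l
      - coupling β l * (u l * activeGain β n (l + 1) + u (l + 1) * activeGain β n l)
      = w l - w (l + 1) := by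
    intro l
    rcases lt_trichotomy (l + 1) n with h | h | h
    · simp only [diagEntry, activeGain, w, if_neg h.ne, if_pos h, if_pos (by omega : l < n)]
      linear_combination u l * diagInner_mul_gain hβ l + u (l + 1) * diagLast_succ_mul_gain hβ l
    · simp only [diagEntry, activeGain, w, if_pos h, if_pos (by omega : l < n),
        if_neg (by omega : ¬l + 1 < n), hu (l + 1) h.ge]
      ring
    · simp only [activeGain, w, if_neg (by omega : ¬l < n), if_neg (by omega : ¬l + 1 < n),
        hu l (by omega)]
      ring
  rw [triForm, sum_congr rfl fun l _ => htelescope l, sum_range_sub']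
  rcases n.eq_zero_or_pos with rfl | hn
  · simp [w, hu 0 le_rfl]
  · simp [w, hn, hnN.not_gt, diagLast, gain, div_eq_mul_inv]

lemma two_mul_triForm_column_le (hβ : 0 < β) (hu : ∀ l, n ≤ l → u l = 0) (hnN : n ≤ N)
    (c : ℝ) :
    2 * triForm (diagEntry β n) (coupling β) N u (fun l => u (l + 1) - c * activeGain β n l)
      ≤ 32 / β * u 0 ^ 2 - c * u 0 - rate β * ∑ l ∈ range N, u l ^ 2 := by
  rw [triForm_sub_mul_right, triForm_activeGain hβ hu hnN]
  linarith [two_mul_triForm_shift_le hβ hu hnN]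

end Column

section Lyapunov

variable {ι : Type*} [DecidableEq ι] {β : ℝ} {r : ℕ} {n : ι → ℕ}

variable (β r n) in
def lyapMatrix : Matrix (Fin r × ι) (Fin r × ι) ℝ :=
  blockDiagonal fun i => triMatrix r (diagEntry β (n i)) (coupling β)

lemma lyapMatrix_isSymm : (lyapMatrix β r n).IsSymm := by
  rw [IsSymm, lyapMatrix, blockDiagonal_transpose]
  exact congrArg blockDiagonal (funext fun _ => triMatrix_isSymm)

lemma lyapMatrix_posDef [Fintype ι] (hβ : 0 < β) : (lyapMatrix β r n).PosDef :=
  PosDef.blockDiagonal fun _ =>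
    triMatrix_posDef (diagEntry_pos hβ _) (coupling_sq_le_diagEntry hβ _)

lemma two_mul_dotProduct_lyapMatrix_le [Fintype ι] (hβ : 0 < β) (hr : 0 < r)
    (hn : ∀ i, n i ≤ r) {y : Fin r → ι → ℝ} {v : Fin r × ι → ℝ} {ζ : ι → ℝ}
    (hy : ∀ (l : Fin r) i, n i ≤ l → y l i = 0)
    (hv : ∀ l i, v (l, i)
      = (if h : (l : ℕ) + 1 < r then y ⟨l + 1, h⟩ i else 0) - ζ i * activeGain β (n i) l)
    (hζ : 32 / β * ∑ i, y ⟨0, hr⟩ i ^ 2 ≤ ∑ i, ζ i * y ⟨0, hr⟩ i) :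
    2 * ((fun p : Fin r × ι => y p.1 p.2) ⬝ᵥ lyapMatrix β r n *ᵥ v)
      ≤ -rate β * ∑ l, ∑ i, y l i ^ 2 := by
  set u : ι → ℕ → ℝ := fun i => zeroExtend fun l => y l i
  have hu : ∀ i l, n i ≤ l → u i l = 0 := fun i l hl => by
    simp only [u, zeroExtend]
    split_ifs
    · exact hy _ i hl
    · rfl
  have hcol : ∀ i, zeroExtend (fun l => v (l, i))
      = fun l => u i (l + 1) - ζ i * activeGain β (n i) l := by
    intro i; funext l
    simp only [u, zeroExtend]
    by_cases hl : l < r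
    · rw [dif_pos hl, hv]
    · rw [dif_neg hl, dif_neg (by omega), activeGain, if_neg (by have := hn i; omega)]; ring
  have hu0 : ∀ i, u i 0 = y ⟨0, hr⟩ i := fun i => by simp [u, zeroExtend, hr]
  have hsq : ∀ i, ∑ l ∈ range r, u i l ^ 2 = ∑ l, y l i ^ 2 := fun i => by
    rw [← Fin.sum_univ_eq_sum_range]; simp only [u, zeroExtend_val]
  rw [lyapMatrix, dotProduct_blockDiagonal_mulVec, mul_sum]
  simp only [dotProduct_triMatrix_mulVec, hcol]
  calc ∑ i, 2 * triForm (diagEntry β (n i)) (coupling β) r (u i)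
          (fun l => u i (l + 1) - ζ i * activeGain β (n i) l)
      ≤ ∑ i, (32 / β * u i 0 ^ 2 - ζ i * u i 0 - rate β * ∑ l ∈ range r, u i l ^ 2) :=
        sum_le_sum fun i _ => two_mul_triForm_column_le hβ (hu i) (hn i) (ζ i)
    _ = 32 / β * ∑ i, y ⟨0, hr⟩ i ^ 2 - ∑ i, ζ i * y ⟨0, hr⟩ i
          - rate β * ∑ l, ∑ i, y l i ^ 2 := by
        simp only [hu0, hsq, sum_sub_distrib, mul_sum]
        rw [sum_comm (s := univ) (t := univ)]
    _ ≤ _ := by linarith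

end Lyapunov

section Active

variable {r : ℕ}

def activeLength (m : Fin r → ℕ) (i : ℕ) : ℕ := #{l | i < 2 * m l}

lemma lt_activeLength_iff {m : Fin r → ℕ} (hm : Antitone m) (i : ℕ) (l : Fin r) :
    (l : ℕ) < activeLength m i ↔ i < 2 * m l :=
  Fin.lt_card_filter_iff_of_antitone (fun _ _ hab hb => hb.trans_le (by have := hm hab; omega)) l

lemma activeLength_le (m : Fin r → ℕ) (i : ℕ) : activeLength m i ≤ r :=
  (card_filter_le _ _).trans_eq (card_fin r)

end Active

end ProjectedLyapunov

open ProjectedLyapunov in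
theorem common_lyapunov_for_projected_system_general (h r : ℕ) (hr : 0 < r)
    (m : Fin r → ℕ) (hmono : Antitone m) (ξ : ℝ) (hξ : 0 < ξ) :
    ∃ (lam : ℝ) (k : Fin r → ℝ)
      (S : Matrix (Fin r × Fin (2 * h)) (Fin r × Fin (2 * h)) ℝ),
      0 < lam ∧ (∀ l, 0 < k l) ∧ S.PosDef ∧
      ∀ C : ℝ → Matrix (Fin (2 * h)) (Fin (2 * h)) ℝ,
        (∀ i j, Measurable fun t => C t i j) →
        (∀ᵐ t ∂(volume.restrict (Set.Ici (0:ℝ))),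
          (C t).IsSymm ∧ (C t - ξ • (1 : Matrix (Fin (2 * h)) (Fin (2 * h)) ℝ)).PosSemidef ∧
            ((1 : Matrix (Fin (2 * h)) (Fin (2 * h)) ℝ) - C t).PosSemidef) →
        ∀ Y : ℝ → Fin r → Fin (2 * h) → ℝ,
          ContinuousOn Y (Set.Ici (0:ℝ)) →
          (∀ t : ℝ, ∀ l : Fin r, (projP h (m l)).mulVec (Y t l) = Y t l) →
          (∀ᵐ t ∂(volume.restrict (Set.Ici (0:ℝ))), ∀ l : Fin r,
            HasDerivAt (fun s => Y s l)
              ((if hl : (l : ℕ) + 1 < r then Y t ⟨(l : ℕ) + 1, hl⟩ else 0)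
                - k l • (projP h (m l)).mulVec ((C t).mulVec (Y t ⟨0, hr⟩))) t) →
          ∀ᵐ t ∂(volume.restrict (Set.Ici (0:ℝ))),
            ∃ d : ℝ,
              HasDerivAt (fun s => dotProduct
                  (fun p : Fin r × Fin (2 * h) => Y s p.1 p.2)
                  (S.mulVec fun p : Fin r × Fin (2 * h) => Y s p.1 p.2)) d t ∧
              d ≤ -lam * ∑ l, ∑ i, (Y t l i) ^ 2 := by
  set β := 32 / ξ
  have hβ : 0 < β := by positivity
  set n : Fin (2 * h) → ℕ := fun i => activeLength m i
  refine ⟨rate β, fun l => gain β l, lyapMatrix β r n, rate_pos hβ, fun l => gain_pos hβ l,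
    lyapMatrix_posDef hβ, fun C _ hC Y _ hYproj hYode => ?_⟩
  filter_upwards [hC, hYode] with t ⟨_, hCξ, _⟩ hode
  refine ⟨_, HasDerivAt.dotProduct_mulVec_self lyapMatrix_isSymm
    (hasDerivAt_pi.2 fun p => hasDerivAt_pi.1 (hode p.1) p.2), ?_⟩
  refine two_mul_dotProduct_lyapMatrix_le hβ hr (n := n) (fun i => activeLength_le m i) (y := Y t)
    (ζ := C t *ᵥ Y t ⟨0, hr⟩) (fun l i hl => apply_eq_zero_of_projP_mulVec_eq (hYproj t l)
      (not_lt.1 ((lt_activeLength_iff hmono _ l).not.1 hl.not_gt))) (fun l i => ?_) ?_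
  · simp only [Pi.sub_apply, Pi.smul_apply, dite_apply, Pi.zero_apply, projP_mulVec_apply,
      activeGain, n, lt_activeLength_iff hmono, smul_eq_mul]
    split_ifs <;> ring
  · rw [div_div_cancel₀ (by norm_num : (32 : ℝ) ≠ 0)]
    exact hCξ.mul_sum_sq_le _

/-- Proposition 1: for all positive `h, r₁`, every non-increasing sequence
`h ≥ m₁ ≥ … ≥ m_{r₁} ≥ 0` and every `ξ > 0`, there exist `λ > 0`, positive gains
`k̄₁, …, k̄_{r₁}` and a symmetric positive definite matrix `S` (of size `2hr₁`, indexed here by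
`Fin r₁ × Fin (2h)`) such that along any solution `Y : [0,∞) → E^h_{m₁,…,m_{r₁}}` of
`Ẏ_l = Y_{l+1} − k̄_l p_l C⋆(t) Y₁` (with `Y_{r₁+1} = 0`), for any measurable symmetric
`C⋆` with `ξ Id ≤ C⋆(t) ≤ Id` a.e., one has `d/dt (Yᵀ S Y) ≤ −λ ‖Y‖²` a.e. on `[0,∞)`. -/
theorem common_lyapunov_for_projected_system (h r : ℕ) (hh : 0 < h) (hr : 0 < r)
    (m : Fin r → ℕ) (hmono : Antitone m) (hbd : ∀ l, m l ≤ h) (ξ : ℝ) (hξ : 0 < ξ) :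
    ∃ (lam : ℝ) (k : Fin r → ℝ)
      (S : Matrix (Fin r × Fin (2 * h)) (Fin r × Fin (2 * h)) ℝ),
      0 < lam ∧ (∀ l, 0 < k l) ∧ S.PosDef ∧
      ∀ C : ℝ → Matrix (Fin (2 * h)) (Fin (2 * h)) ℝ,
        (∀ i j, Measurable fun t => C t i j) →
        (∀ᵐ t ∂(volume.restrict (Set.Ici (0:ℝ))),
          (C t).IsSymm ∧ (C t - ξ • (1 : Matrix (Fin (2 * h)) (Fin (2 * h)) ℝ)).PosSemidef ∧
            ((1 : Matrix (Fin (2 * h)) (Fin (2 * h)) ℝ) - C t).PosSemidef) →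
        ∀ Y : ℝ → Fin r → Fin (2 * h) → ℝ,
          ContinuousOn Y (Set.Ici (0:ℝ)) →
          (∀ t : ℝ, ∀ l : Fin r, (projP h (m l)).mulVec (Y t l) = Y t l) →
          (∀ᵐ t ∂(volume.restrict (Set.Ici (0:ℝ))), ∀ l : Fin r,
            HasDerivAt (fun s => Y s l)
              ((if hl : (l : ℕ) + 1 < r then Y t ⟨(l : ℕ) + 1, hl⟩ else 0)
                - k l • (projP h (m l)).mulVec ((C t).mulVec (Y t ⟨0, hr⟩))) t) →
          ∀ᵐ t ∂(volume.restrict (Set.Ici (0:ℝ))),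
            ∃ d : ℝ,
              HasDerivAt (fun s => dotProduct
                  (fun p : Fin r × Fin (2 * h) => Y s p.1 p.2)
                  (S.mulVec fun p : Fin r × Fin (2 * h) => Y s p.1 p.2)) d t ∧
              d ≤ -lam * ∑ l, ∑ i, (Y t l i) ^ 2 :=
  common_lyapunov_for_projected_system_general h r hr m hmono ξ hξ
end
end

section
/- Let n ∈ ℕ, J_n ∈ M_n(ℝ) the matrix with ones on the superdiagonal and zeros elsewhere, b = (0,...,0,1)ᵀ ∈ ℝⁿ, 0 < μ ≤ T and ν > 0, and let D_{n,ν} = diag(ν^{n−1}, ν^{n−2}, ..., ν, 1). Then K ∈ ℝⁿ is a (T,μ)-stabilizer for the pair (J_n, b) if and only if ν D_{n,ν} K is a (T/ν, μ/ν)-stabilizer for the pair (J_n, b). -/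
open MeasureTheory Filter Matrix

noncomputable section

/-- `x` is the solution of `ẋ = (A - α(t) b Kᵀ) x`, `x(t₀) = x₀`, in integral (Carathéodory)
form. -/
def IsLinSol {n : ℕ} (A : Matrix (Fin n) (Fin n) ℝ) (b K : Fin n → ℝ)
    (α : ℝ → ℝ) (t₀ : ℝ) (x₀ : Fin n → ℝ) (x : ℝ → Fin n → ℝ) : Prop :=
  x t₀ = x₀ ∧ ∀ t : ℝ, t₀ ≤ t →
    x t = x₀ + ∫ s in t₀..t, (A - α s • vecMulVec b K).mulVec (x s)

/-- `K` is a `(T,μ)`-stabilizer for the pair `(A,b)`. -/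
def IsStabilizer {n : ℕ} (T μ : ℝ) (A : Matrix (Fin n) (Fin n) ℝ) (b K : Fin n → ℝ) : Prop :=
  ∃ C > (0:ℝ), ∃ γ > (0:ℝ), ∀ α : ℝ → ℝ, IsPESignal T μ α →
    ∀ t₀ : ℝ, 0 ≤ t₀ → ∀ x₀ : Fin n → ℝ, ∀ x : ℝ → Fin n → ℝ,
      IsLinSol A b K α t₀ x₀ x →
      ∀ t : ℝ, t₀ ≤ t → ‖x t‖ ≤ C * Real.exp (-γ * (t - t₀)) * ‖x₀‖

/-- The nilpotent Jordan block `J_n` (ones on the superdiagonal). -/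
def Jmat (n : ℕ) : Matrix (Fin n) (Fin n) ℝ :=
  Matrix.of fun i j => if (j : ℕ) = (i : ℕ) + 1 then 1 else 0

/-- The vector `(0, …, 0, 1)ᵀ ∈ ℝⁿ`. -/
def elast (n : ℕ) : Fin n → ℝ := fun i => if (i : ℕ) = n - 1 then 1 else 0

-- auxiliary
abbrev dvec (n : ℕ) (ν : ℝ) : Fin n → ℝ := fun i => ν ^ (n - 1 - (i : ℕ))

/-- The matrix identity `D (J - c b K'ᵀ) = ν (J - c b Kᵀ) D` with `K' = ν D K`. -/
lemma matrix_key (n : ℕ) (ν c : ℝ) (K : Fin n → ℝ) :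
    Matrix.diagonal (dvec n ν) *
        (Jmat n - c • vecMulVec (elast n) (ν • (Matrix.diagonal (dvec n ν)).mulVec K)) =
      ν • ((Jmat n - c • vecMulVec (elast n) K) * Matrix.diagonal (dvec n ν)) := by
  ext i j
  simp only [Matrix.diagonal_mul, Matrix.smul_apply, Matrix.mul_diagonal, Matrix.sub_apply,
    Matrix.vecMulVec_apply, Pi.smul_apply, Matrix.mulVec_diagonal, Jmat, elast,
    Matrix.of_apply, smul_eq_mul, dvec]
  by_cases h1 : (j : ℕ) = (i : ℕ) + 1 <;> by_cases h2 : (i : ℕ) = n - 1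
  · exact absurd j.isLt (by omega)
  · have hp : n - 1 - (i : ℕ) = (n - 1 - (j : ℕ)) + 1 := by have := j.isLt; omega
    rw [if_pos h1, if_neg h2, hp, pow_succ]
    ring
  · have hp : n - 1 - (i : ℕ) = 0 := by omega
    rw [if_neg h1, if_pos h2, hp, pow_zero]
    ring
  · rw [if_neg h1, if_neg h2]
    ring

lemma vec_key (n : ℕ) (ν c : ℝ) (K v : Fin n → ℝ) :
    (Matrix.diagonal (dvec n ν)).mulVec
        ((Jmat n - c • vecMulVec (elast n) (ν • (Matrix.diagonal (dvec n ν)).mulVec K)).mulVec v) =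
      ν • ((Jmat n - c • vecMulVec (elast n) K).mulVec
        ((Matrix.diagonal (dvec n ν)).mulVec v)) := by
  rw [Matrix.mulVec_mulVec, matrix_key, Matrix.smul_mulVec, ← Matrix.mulVec_mulVec]

/-- The diagonal scaling as a linear equivalence. -/
def Dlin (n : ℕ) {ν : ℝ} (hν : ν ≠ 0) : (Fin n → ℝ) ≃ₗ[ℝ] (Fin n → ℝ) :=
  LinearEquiv.ofLinear (Matrix.diagonal (dvec n ν)).mulVecLin
    (Matrix.diagonal fun i => (dvec n ν i)⁻¹).mulVecLin
    (LinearMap.ext fun w => funext fun i => by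
      simp [Matrix.mulVec_diagonal, ← mul_assoc, mul_inv_cancel₀ (pow_ne_zero _ hν)])
    (LinearMap.ext fun w => funext fun i => by
      simp [Matrix.mulVec_diagonal, ← mul_assoc, inv_mul_cancel₀ (pow_ne_zero _ hν)])

lemma Dlin_apply (n : ℕ) {ν : ℝ} (hν : ν ≠ 0) (v : Fin n → ℝ) :
    Dlin n hν v = (Matrix.diagonal (dvec n ν)).mulVec v := rfl

lemma cle_intervalIntegral {E F : Type*} [NormedAddCommGroup E] [NormedSpace ℝ E]
    [NormedAddCommGroup F] [NormedSpace ℝ F] (L : E ≃L[ℝ] F) (f : ℝ → E) (a b : ℝ) :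
    L (∫ s in a..b, f s) = ∫ s in a..b, L (f s) := by
  simp only [intervalIntegral, map_sub]
  rw [L.integral_comp_comm, L.integral_comp_comm]

lemma key (n : ℕ) (T μ ν : ℝ) (hν : 0 < ν) (K : Fin n → ℝ)
    (h : IsStabilizer T μ (Jmat n) (elast n) K) :
    IsStabilizer (T / ν) (μ / ν) (Jmat n) (elast n)
      (ν • (Matrix.diagonal (dvec n ν)).mulVec K) := by
  obtain ⟨C, hC, γ, hγ, H⟩ := h
  let e : (Fin n → ℝ) ≃ₗ[ℝ] (Fin n → ℝ) := Dlin n hν.ne'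
  let E := e.toContinuousLinearEquiv
  have hE : ∀ v, E v = (Matrix.diagonal (dvec n ν)).mulVec v := fun v => rfl
  refine ⟨C * ((‖(E.symm : (Fin n → ℝ) →L[ℝ] (Fin n → ℝ))‖ + 1) *
      (‖(E : (Fin n → ℝ) →L[ℝ] (Fin n → ℝ))‖ + 1)), by positivity, γ * ν, by positivity, ?_⟩
  intro β hβ s₀ hs₀ y₀ y hy t ht
  set D := Matrix.diagonal (dvec n ν) with hD
  set α : ℝ → ℝ := fun τ => β (τ / ν) with hαdef
  have hα : IsPESignal T μ α := by
    refine ⟨hβ.1.comp (measurable_id.div_const ν), fun τ => hβ.2.1 _, fun τ hτp => ?_⟩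
    have h2 := hβ.2.2 (τ / ν) (div_nonneg hτp hν.le)
    calc μ = ν * (μ / ν) := by field_simp
      _ ≤ ν * ∫ s in (τ/ν)..(τ/ν + T/ν), β s := mul_le_mul_of_nonneg_left h2 hν.le
      _ = ∫ s in τ..(τ + T), α s := by
          simp only [hαdef]
          rw [intervalIntegral.integral_comp_div _ hν.ne', add_div, smul_eq_mul]
  set x : ℝ → Fin n → ℝ := fun τ => D.mulVec (y (τ / ν)) with hxdef
  have hx : IsLinSol (Jmat n) (elast n) K α (ν * s₀) (D.mulVec y₀) x := by
    constructor
    · simp only [hxdef]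
      rw [mul_div_cancel_left₀ _ hν.ne', hy.1]
    · intro τ hτ
      have hτν : s₀ ≤ τ / ν := (le_div_iff₀ hν).mpr (by linarith [mul_comm s₀ ν])
      have heq := hy.2 (τ / ν) hτν
      have hcan : ν * (τ / ν) = τ := by field_simp
      calc x τ = D.mulVec (y (τ / ν)) := rfl
        _ = D.mulVec y₀ + D.mulVec (∫ s in s₀..(τ/ν),
              (Jmat n - β s • vecMulVec (elast n) (ν • D.mulVec K)).mulVec (y s)) := by
            rw [heq, Matrix.mulVec_add]
        _ = D.mulVec y₀ + ∫ s in s₀..(τ/ν),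
              D.mulVec ((Jmat n - β s • vecMulVec (elast n) (ν • D.mulVec K)).mulVec (y s)) := by
            rw [(hE (∫ s in s₀..(τ/ν),
              (Jmat n - β s • vecMulVec (elast n) (ν • D.mulVec K)).mulVec (y s))).symm,
              cle_intervalIntegral]
            simp only [hE]
        _ = D.mulVec y₀ + ∫ s in s₀..(τ/ν),
              ν • ((Jmat n - α (ν * s) • vecMulVec (elast n) K).mulVec (x (ν * s))) := by
            congr 1
            refine intervalIntegral.integral_congr fun s _ => ?_
            rw [hD, vec_key]
            simp only [hαdef, hxdef, hD, mul_div_cancel_left₀ _ hν.ne']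
        _ = D.mulVec y₀ + ∫ s in (ν * s₀)..τ,
              (Jmat n - α s • vecMulVec (elast n) K).mulVec (x s) := by
            rw [intervalIntegral.integral_smul,
              intervalIntegral.smul_integral_comp_mul_left
                (fun s => (Jmat n - α s • vecMulVec (elast n) K).mulVec (x s)) ν,
              hcan]
  have hb := H α hα (ν * s₀) (mul_nonneg hν.le hs₀) _ x hx (ν * t) (by nlinarith)
  have hexp : Real.exp (-γ * (ν * t - ν * s₀)) = Real.exp (-(γ * ν) * (t - s₀)) := by
    ring_nf
  rw [hexp] at hb
  have hxt : x (ν * t) = E (y t) := by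
    simp only [hxdef, mul_div_cancel_left₀ _ hν.ne', hE]
  have h1 : ‖y t‖ ≤ (‖(E.symm : (Fin n → ℝ) →L[ℝ] (Fin n → ℝ))‖ + 1) * ‖x (ν * t)‖ := by
    have hy' : y t = E.symm (x (ν * t)) := by rw [hxt]; simp
    rw [hy']
    calc ‖E.symm (x (ν*t))‖ ≤ ‖(E.symm : (Fin n → ℝ) →L[ℝ] (Fin n → ℝ))‖ * ‖x (ν*t)‖ :=
        (E.symm : (Fin n → ℝ) →L[ℝ] (Fin n → ℝ)).le_opNorm _
      _ ≤ _ := by nlinarith [norm_nonneg (x (ν*t))]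
  have h2 : ‖D.mulVec y₀‖ ≤ (‖(E : (Fin n → ℝ) →L[ℝ] (Fin n → ℝ))‖ + 1) * ‖y₀‖ := by
    rw [← hE]
    calc ‖E y₀‖ ≤ ‖(E : (Fin n → ℝ) →L[ℝ] (Fin n → ℝ))‖ * ‖y₀‖ :=
        (E : (Fin n → ℝ) →L[ℝ] (Fin n → ℝ)).le_opNorm _
      _ ≤ _ := by nlinarith [norm_nonneg y₀]
  have hA : (0:ℝ) ≤ ‖(E.symm : (Fin n → ℝ) →L[ℝ] (Fin n → ℝ))‖ + 1 := by positivity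
  have hexp' : (0:ℝ) ≤ Real.exp (-(γ * ν) * (t - s₀)) := (Real.exp_pos _).le
  calc ‖y t‖ ≤ (‖(E.symm : (Fin n → ℝ) →L[ℝ] (Fin n → ℝ))‖ + 1) * ‖x (ν * t)‖ := h1
    _ ≤ (‖(E.symm : (Fin n → ℝ) →L[ℝ] (Fin n → ℝ))‖ + 1) *
        (C * Real.exp (-(γ * ν) * (t - s₀)) * ‖D.mulVec y₀‖) :=
      mul_le_mul_of_nonneg_left hb hA
    _ ≤ (‖(E.symm : (Fin n → ℝ) →L[ℝ] (Fin n → ℝ))‖ + 1) *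
        (C * Real.exp (-(γ * ν) * (t - s₀)) *
          ((‖(E : (Fin n → ℝ) →L[ℝ] (Fin n → ℝ))‖ + 1) * ‖y₀‖)) := by
      have : (0:ℝ) ≤ C * Real.exp (-(γ * ν) * (t - s₀)) := by positivity
      exact mul_le_mul_of_nonneg_left (mul_le_mul_of_nonneg_left h2 this) hA
    _ = C * ((‖(E.symm : (Fin n → ℝ) →L[ℝ] (Fin n → ℝ))‖ + 1) *
        (‖(E : (Fin n → ℝ) →L[ℝ] (Fin n → ℝ))‖ + 1)) *
        Real.exp (-(γ * ν) * (t - s₀)) * ‖y₀‖ := by ring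


/-- Time-space rescaling for the `n`-integrator: with `D_{n,ν} = diag(ν^{n−1}, …, ν, 1)`,
`K` is a `(T,μ)`-stabilizer for `(J_n, b)` if and only if `ν D_{n,ν} K` is a
`(T/ν, μ/ν)`-stabilizer for `(J_n, b)`. -/
theorem n_integrator_rescaling (n : ℕ) (hn : 0 < n) (T μ ν : ℝ)
    (hμ : 0 < μ) (hμT : μ ≤ T) (hν : 0 < ν) (K : Fin n → ℝ) :
    IsStabilizer T μ (Jmat n) (elast n) K ↔
      IsStabilizer (T / ν) (μ / ν) (Jmat n) (elast n)
        (ν • (Matrix.diagonal fun i : Fin n => ν ^ (n - 1 - (i : ℕ))).mulVec K) := by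
  constructor
  · exact key n T μ ν hν K
  · intro h
    have h2 := key n (T/ν) (μ/ν) ν⁻¹ (inv_pos.mpr hν)
      (ν • (Matrix.diagonal (dvec n ν)).mulVec K) h
    have e1 : T / ν / ν⁻¹ = T := by field_simp
    have e2 : μ / ν / ν⁻¹ = μ := by field_simp
    have e3 : ν⁻¹ • (Matrix.diagonal (dvec n ν⁻¹)).mulVec
        (ν • (Matrix.diagonal (dvec n ν)).mulVec K) = K := by
      funext i
      have hνe : ν ≠ 0 := hν.ne'
      simp only [Pi.smul_apply, Matrix.mulVec_diagonal, dvec, smul_eq_mul, inv_pow]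
      field_simp
    rwa [e1, e2, e3] at h2

end
end
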